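/- arXiv:math/0006015 — 5 statements merged into one kernel-verified Lean document; each statement's English description precedes it below -/
import Mathlib

section
/- Under the coercivity hypothesis L(x,u) ≥ Θ(u) with Θ superlinear, and lower semicontinuity of L, for every fixed p the function x ↦ H(x,p) = sup_u (⟨p,u⟩ − L(x,u)) is upper semicontinuous. Consequently, for every x ∈ ℝⁿ, M > 0 and ε > 0 there is a neighbourhood U of x such that H(x,p) + ε > H(y,p) for all y ∈ U and all p in the closed ball B_M. -/
open Filter Topology Metric Set
open scoped RealInnerProductSpace

noncomputable section

abbrev Euc (n : ℕ) := EuclideanSpace ℝ (Fin n)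

def contCone {F : Type*} [NormedAddCommGroup F] [NormedSpace ℝ F] (K : Set F) (x : F) : Set F :=
  {v | ∀ ε > 0, ∃ h : ℝ, 0 < h ∧ h < ε ∧ Metric.infDist (x + h • v) K < ε * h}

def Dup {F : Type*} [NormedAddCommGroup F] [NormedSpace ℝ F]
    (W : F → EReal) (x u : F) : EReal :=
  Filter.liminf (fun p : ℝ × F => ((p.1⁻¹ : ℝ) : EReal) * (W (x + p.1 • p.2) - W x))
    ((𝓝[>] (0:ℝ)) ×ˢ 𝓝 u)

def Ham {n : ℕ} (L : Euc n → Euc n → ℝ) (x p : Euc n) : EReal :=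
  ⨆ u : Euc n, ((⟪p, u⟫ - L x u : ℝ) : EReal)

def subdiffP {n : ℕ} (W : ℝ × Euc n → EReal) (q : ℝ × Euc n) : Set (ℝ × Euc n) :=
  {p | ∀ ε > 0, ∀ᶠ z in 𝓝 q,
    W q + ((p.1 * (z.1 - q.1) + ⟪p.2, z.2 - q.2⟫ - ε * ‖z - q‖ : ℝ) : EReal) ≤ W z}

def bolzaValue {n : ℕ} (L : Euc n → Euc n → ℝ) (φ : Euc n → EReal) (t : ℝ) (x : Euc n) : EReal :=
  sInf {c : EReal | ∃ u : ℝ → Euc n,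
    IntervalIntegrable u MeasureTheory.volume 0 t ∧
    IntervalIntegrable (fun s => L (x + ∫ τ in (0:ℝ)..s, u τ) (u s)) MeasureTheory.volume 0 t ∧
    c = ((∫ s in (0:ℝ)..t, L (x + ∫ τ in (0:ℝ)..s, u τ) (u s) : ℝ) : EReal)
        + φ (x + ∫ τ in (0:ℝ)..t, u τ)}

def Superlinear {n : ℕ} (Θ : Euc n → ℝ) : Prop :=
  Filter.Tendsto (fun u : Euc n => Θ u / ‖u‖) (Filter.comap norm Filter.atTop) Filter.atTop

def negPolar {n : ℕ} (T : Set (Euc n)) : Set (Euc n) :=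
  {v | ∀ w ∈ T, ⟪v, w⟫ ≤ 0}

/-!
Superlinear coercivity makes the supremum defining `H(y, p)`, for `‖p‖ ≤ M`, insensitive to
`u` outside a fixed ball `‖u‖ ≤ R`: beyond it `⟪p, u⟫ - L y u ≤ -‖u‖ ≤ -L x 0`, which is the
value of the `u = 0` term at `x`. On that compact ball, lower semicontinuity of `L` together with
a finite subcover gives `L x w < L y u + ε` for some `w` close to `u` once `y` is close to `x`,
uniformly in `u`, and hence `H(y, p) ≤ H(x, p) + ε` uniformly in `‖p‖ ≤ M`.
-/

theorem Superlinear.exists_mul_norm_le {n : ℕ} {Θ : Euc n → ℝ} (h : Superlinear Θ) (A : ℝ) :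
    ∃ R : ℝ, 0 < R ∧ ∀ u : Euc n, R ≤ ‖u‖ → A * ‖u‖ ≤ Θ u := by
  obtain ⟨R, hR⟩ := eventually_atTop.mp <|
    eventually_comap.mp (h.eventually (eventually_ge_atTop A))
  refine ⟨max R 1, by positivity, fun u hu => ?_⟩
  have hu_pos : 0 < ‖u‖ := one_pos.trans_le ((le_max_right _ _).trans hu)
  have := hR ‖u‖ ((le_max_left _ _).trans hu) u rfl
  rwa [le_div_iff₀ hu_pos] at this

theorem LowerSemicontinuous.eventually_forall_exists_lt_add {X Y : Type*} [TopologicalSpace X]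
    [PseudoMetricSpace Y] {f : X × Y → ℝ} (hf : LowerSemicontinuous f) {K : Set Y}
    (hK : IsCompact K) (x : X) {ε η : ℝ} (hε : 0 < ε) (hη : 0 < η) :
    ∀ᶠ y in 𝓝 x, ∀ v ∈ K, ∃ w, dist v w < η ∧ f (x, w) < f (y, v) + ε := by
  refine hK.eventually_forall_of_forall_eventually fun w _ => ?_
  have hlsc : ∀ᶠ z in 𝓝 (x, w), f (x, w) - ε < f z := hf (x, w) _ (by linarith)
  have hnear : ∀ᶠ z in 𝓝 (x, w), z.2 ∈ ball w η :=
    continuous_snd.continuousAt.preimage_mem_nhds (ball_mem_nhds w hη)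
  filter_upwards [hlsc, hnear] with z hz hz'
  exact ⟨w, hz', by linarith⟩

section Hamiltonian

variable {n : ℕ} {L : Euc n → Euc n → ℝ}

theorem le_ham (x p u : Euc n) : ((⟪p, u⟫ - L x u : ℝ) : EReal) ≤ Ham L x p :=
  le_iSup (fun u : Euc n => ((⟪p, u⟫ - L x u : ℝ) : EReal)) u

theorem ham_ne_bot (x p : Euc n) : Ham L x p ≠ ⊥ :=
  ne_bot_of_le_ne_bot (EReal.coe_ne_bot _) (le_ham x p 0)

theorem inner_sub_le_neg_norm {Θ : Euc n → ℝ} (hcoer : ∀ x u, Θ u ≤ L x u) {M R : ℝ}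
    (hR : ∀ u : Euc n, R ≤ ‖u‖ → (M + 1) * ‖u‖ ≤ Θ u) {p u : Euc n} (hp : ‖p‖ ≤ M)
    (hu : R ≤ ‖u‖) (y : Euc n) : ⟪p, u⟫ - L y u ≤ -‖u‖ := by
  have hinner : ⟪p, u⟫ ≤ M * ‖u‖ :=
    (real_inner_le_norm p u).trans (mul_le_mul_of_nonneg_right hp (norm_nonneg u))
  linarith [hR u hu, hcoer y u]

theorem ham_ne_top {Θ : Euc n → ℝ} (hL0 : ∀ x u, 0 ≤ L x u) (hΘsl : Superlinear Θ)
    (hcoer : ∀ x u, Θ u ≤ L x u) (x p : Euc n) : Ham L x p ≠ ⊤ := by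
  obtain ⟨R, hR_pos, hR⟩ := hΘsl.exists_mul_norm_le (‖p‖ + 1)
  refine ne_top_of_le_ne_top (EReal.coe_ne_top (‖p‖ * R)) (iSup_le fun u => ?_)
  rw [EReal.coe_le_coe_iff]
  rcases le_or_gt R ‖u‖ with hu | hu
  · linarith [inner_sub_le_neg_norm hcoer hR le_rfl hu x, norm_nonneg u,
      mul_nonneg (norm_nonneg p) hR_pos.le]
  · have hinner : ⟪p, u⟫ ≤ ‖p‖ * R :=
      (real_inner_le_norm p u).trans (mul_le_mul_of_nonneg_left hu.le (norm_nonneg p))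
    linarith [hL0 x u]

theorem exists_ham_eq_coe {Θ : Euc n → ℝ} (hL0 : ∀ x u, 0 ≤ L x u) (hΘsl : Superlinear Θ)
    (hcoer : ∀ x u, Θ u ≤ L x u) (x p : Euc n) : ∃ a : ℝ, Ham L x p = a :=
  ⟨_, (EReal.coe_toReal (ham_ne_top hL0 hΘsl hcoer x p) (ham_ne_bot x p)).symm⟩

theorem eventually_ham_le_ham_add {Θ : Euc n → ℝ}
    (hLlsc : LowerSemicontinuous (fun q : Euc n × Euc n => L q.1 q.2))
    (hΘsl : Superlinear Θ) (hcoer : ∀ x u, Θ u ≤ L x u)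
    (x : Euc n) {M : ℝ} (hM : 0 < M) {ε : ℝ} (hε : 0 < ε) :
    ∀ᶠ y in 𝓝 x, ∀ p : Euc n, ‖p‖ ≤ M → Ham L y p ≤ Ham L x p + ε := by
  obtain ⟨R₀, -, hR₀⟩ := hΘsl.exists_mul_norm_le (M + 1)
  set R := max R₀ (L x 0)
  have hnear := hLlsc.eventually_forall_exists_lt_add (isCompact_closedBall (0 : Euc n) R) x
    (half_pos hε) (div_pos hε (mul_pos two_pos hM))
  filter_upwards [hnear] with y hy p hp
  refine iSup_le fun u => ?_
  rcases le_or_gt ‖u‖ R with hu | hu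
  · obtain ⟨w, huw, hw⟩ := hy u (mem_closedBall_zero_iff.mpr hu)
    have hinner : ⟪p, u - w⟫ ≤ ε / 2 :=
      calc ⟪p, u - w⟫ ≤ ‖p‖ * ‖u - w‖ := real_inner_le_norm _ _
        _ ≤ M * (ε / (2 * M)) := by
          rw [← dist_eq_norm]; exact mul_le_mul hp huw.le dist_nonneg hM.le
        _ = ε / 2 := by field_simp
    have hreal : ⟪p, u⟫ - L y u ≤ (⟪p, w⟫ - L x w) + ε := by
      rw [inner_sub_right] at hinner; linarith
    calc ((⟪p, u⟫ - L y u : ℝ) : EReal) ≤ ((⟪p, w⟫ - L x w : ℝ) : EReal) + ε := by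
          exact_mod_cast hreal
      _ ≤ Ham L x p + ε := by gcongr; exact le_ham x p w
  · have hfar : ⟪p, u⟫ - L y u ≤ ⟪p, (0 : Euc n)⟫ - L x 0 := by
      rw [inner_zero_right]
      linarith [inner_sub_le_neg_norm hcoer hR₀ hp ((le_max_left _ _).trans hu.le) y,
        le_max_right R₀ (L x 0)]
    calc ((⟪p, u⟫ - L y u : ℝ) : EReal) ≤ Ham L x p :=
          (EReal.coe_le_coe hfar).trans (le_ham x p 0)
      _ ≤ Ham L x p + ε := le_add_of_nonneg_right (EReal.coe_nonneg.mpr hε.le)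

end Hamiltonian

theorem stmt2_general {n : ℕ} (L : Euc n → Euc n → ℝ) (Θ : Euc n → ℝ)
    (hL0 : ∀ x u, 0 ≤ L x u)
    (hLlsc : LowerSemicontinuous (fun q : Euc n × Euc n => L q.1 q.2))
    (hΘsl : Superlinear Θ)
    (hcoer : ∀ x u, Θ u ≤ L x u) :
    (∀ p : Euc n, UpperSemicontinuous (fun x => Ham L x p)) ∧
    (∀ x : Euc n, ∀ M : ℝ, 0 < M → ∀ ε : ℝ, 0 < ε →
      ∃ U ∈ 𝓝 x, ∀ y ∈ U, ∀ p : Euc n, ‖p‖ ≤ M →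
        Ham L y p < Ham L x p + ((ε : ℝ) : EReal)) := by
  refine ⟨fun p x c hc => ?_, fun x M hM ε hε => ?_⟩
  · obtain ⟨a, ha⟩ := exists_ham_eq_coe hL0 hΘsl hcoer x p
    obtain ⟨r, har, hrc⟩ := EReal.lt_iff_exists_real_btwn.mp (show (a : EReal) < c from ha ▸ hc)
    have hε : 0 < r - a := sub_pos.mpr (EReal.coe_lt_coe_iff.mp har)
    filter_upwards [eventually_ham_le_ham_add hLlsc hΘsl hcoer x
      (by positivity : 0 < ‖p‖ + 1) hε] with y hy
    refine (hy p (by linarith)).trans_lt ?_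
    rwa [ha, ← EReal.coe_add, add_sub_cancel]
  · refine ⟨_, eventually_ham_le_ham_add hLlsc hΘsl hcoer x hM (half_pos hε), fun y hy p hp => ?_⟩
    obtain ⟨a, ha⟩ := exists_ham_eq_coe hL0 hΘsl hcoer x p
    refine (hy p hp).trans_lt ?_
    rw [ha, ← EReal.coe_add, ← EReal.coe_add, EReal.coe_lt_coe_iff]
    linarith

theorem stmt2 {n : ℕ} (L : Euc n → Euc n → ℝ) (Θ : Euc n → ℝ)
    (hL0 : ∀ x u, 0 ≤ L x u)
    (hLlsc : LowerSemicontinuous (fun q : Euc n × Euc n => L q.1 q.2))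
    (hLloc : ∀ q : Euc n × Euc n, ∃ U ∈ 𝓝 q, ∃ C : ℝ, ∀ r ∈ U, L r.1 r.2 ≤ C)
    (hconv : ∀ x, ConvexOn ℝ Set.univ (L x))
    (hΘ0 : ∀ u, 0 ≤ Θ u)
    (hΘsl : Superlinear Θ)
    (hcoer : ∀ x u, Θ u ≤ L x u) :
    (∀ p : Euc n, UpperSemicontinuous (fun x => Ham L x p)) ∧
    (∀ x : Euc n, ∀ M : ℝ, 0 < M → ∀ ε : ℝ, 0 < ε →
      ∃ U ∈ 𝓝 x, ∀ y ∈ U, ∀ p : Euc n, ‖p‖ ≤ M →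
        Ham L y p < Ham L x p + ((ε : ℝ) : EReal)) :=
  stmt2_general L Θ hL0 hLlsc hΘsl hcoer
end
end

section
/- Let K ⊆ ℝⁿ be closed and G : K ⇉ ℝⁿ upper semicontinuous with compact convex values. Then K is a viability domain of G (i.e., G(x) ∩ T_K(x) ≠ ∅ for all x ∈ K) if and only if G(x) ∩ closure(convexHull(T_K(x))) ≠ ∅ for every x ∈ K. -/
/-!
Fix `x₀ ∈ K` and run an Euler scheme from `x₀`: project the current point `y` onto `K` at `z`
and move by `h • v` with `v ∈ G z ∩ cl co T_K(z)`. As `y - z` is a proximal normal at `z`, it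
makes a nonpositive inner product with `T_K(z)`, hence with its closed convex hull, so
`d_K(y + h • v)² ≤ d_K(y)² + h² ‖v‖²`. After `N` steps of size `t / N` the point `x₀ + t • a` is
within `O(t / √N)` of `K`, and by upper semicontinuity and convexity the mean velocity `a` is
close to some `g ∈ G x₀`. Thus for every `ε` some `g ∈ G x₀` and `t < ε` satisfy
`d_K(x₀ + t • g) < ε t`, and by compactness of `G x₀` a cluster point of these `g` lies in
`T_K(x₀)`.
-/

open Filter Topology Metric Set
open scoped RealInnerProductSpace

noncomputable section

def USCOn {n : ℕ} (K : Set (Euc n)) (G : Euc n → Set (Euc n)) : Prop :=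
  ∀ x ∈ K, ∀ V : Set (Euc n), IsOpen V → G x ⊆ V → ∃ U ∈ 𝓝 x, ∀ y ∈ U ∩ K, G y ⊆ V

open scoped Pointwise

section InnerProductSpace

variable {F : Type*} [NormedAddCommGroup F] [InnerProductSpace ℝ F] {K : Set F} {y z : F}

lemma inner_nonpos_of_mem_contCone (hz : z ∈ K) (hyz : infDist y K = dist y z) {w : F}
    (hw : w ∈ contCone K z) : ⟪y - z, w⟫ ≤ 0 := by
  set C := 2 * ‖y - z‖ + (‖w‖ + 1) ^ 2
  suffices h : ∀ ε ∈ Ioo (0 : ℝ) 1, 2 * ⟪y - z, w⟫ ≤ ε * C by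
    have hlim : Tendsto (fun ε => ε * C) (𝓝[>] 0) (𝓝 0) := by
      simpa using (tendsto_nhdsWithin_of_tendsto_nhds (tendsto_id (x := 𝓝 (0 : ℝ)))).mul_const C
    linarith [ge_of_tendsto hlim (eventually_of_mem (Ioo_mem_nhdsGT one_pos) h)]
  rintro ε ⟨hε, hε1⟩
  obtain ⟨h, hh, hhε, hd⟩ := hw ε hε
  obtain ⟨k, hk, hzk⟩ := (infDist_lt_iff ⟨z, hz⟩).1 hd
  set e := k - z - h • w
  have he : ‖e‖ ≤ ε * h := by
    rw [dist_comm, dist_eq_norm] at hzk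
    exact (show k - (z + h • w) = e by simp only [e]; abel) ▸ hzk.le
  have hnear : 2 * ⟪y - z, h • w + e⟫ ≤ ‖h • w + e‖ ^ 2 := by
    have hkz : ‖y - z‖ ^ 2 ≤ ‖(y - z) - (h • w + e)‖ ^ 2 := by
      have := hyz ▸ infDist_le_dist_of_mem (x := y) hk
      rw [dist_eq_norm, dist_eq_norm] at this
      rw [show (y - z) - (h • w + e) = y - k by simp only [e]; abel]
      gcongr
    rw [norm_sub_sq_real (y - z) (h • w + e)] at hkz
    linarith
  have hpe : -(‖y - z‖ * (ε * h)) ≤ ⟪y - z, e⟫ := by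
    have := neg_abs_le ⟪y - z, e⟫
    have := abs_real_inner_le_norm (y - z) e
    nlinarith [norm_nonneg (y - z)]
  have hwe : ‖h • w + e‖ ≤ h * (‖w‖ + 1) := by
    calc ‖h • w + e‖ ≤ h * ‖w‖ + ε * h := by
          grw [norm_add_le, norm_smul, Real.norm_of_nonneg hh.le, he]
      _ ≤ h * (‖w‖ + 1) := by nlinarith
  rw [inner_add_right, real_inner_smul_right] at hnear
  have hwe2 : ‖h • w + e‖ ^ 2 ≤ h * (ε * (‖w‖ + 1) ^ 2) := by
    calc ‖h • w + e‖ ^ 2 ≤ (h * (‖w‖ + 1)) ^ 2 := by gcongr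
      _ = h * (h * (‖w‖ + 1) ^ 2) := by ring
      _ ≤ h * (ε * (‖w‖ + 1) ^ 2) := by gcongr
  have : h * (2 * ⟪y - z, w⟫) ≤ h * (ε * C) := by nlinarith
  exact le_of_mul_le_mul_left this hh

lemma inner_nonpos_of_mem_closure_convexHull {T : Set F} {p v : F} (hT : ∀ w ∈ T, ⟪p, w⟫ ≤ 0)
    (hv : v ∈ closure (convexHull ℝ T)) : ⟪p, v⟫ ≤ 0 := by
  have hlin : IsLinearMap ℝ (fun u : F => ⟪p, u⟫) :=
    ⟨fun a b => inner_add_right _ _ _, fun c a => real_inner_smul_right _ _ _⟩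
  exact closure_minimal (convexHull_min hT (convex_halfSpace_le hlin 0))
    (isClosed_le (f := fun u : F => ⟪p, u⟫) (by fun_prop) continuous_const) hv

lemma infDist_add_smul_sq_le (hz : z ∈ K) (hyz : infDist y K = dist y z) {v : F}
    (hv : v ∈ closure (convexHull ℝ (contCone K z))) {h : ℝ} (hh : 0 ≤ h) :
    infDist (y + h • v) K ^ 2 ≤ infDist y K ^ 2 + (h * ‖v‖) ^ 2 := by
  have hinner : ⟪y - z, h • v⟫ ≤ 0 := by
    rw [real_inner_smul_right]
    exact mul_nonpos_of_nonneg_of_nonpos hh (inner_nonpos_of_mem_closure_convexHull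
      (fun w hw => inner_nonpos_of_mem_contCone hz hyz hw) hv)
  have hdist := infDist_le_dist_of_mem (x := y + h • v) hz
  rw [dist_eq_norm, show y + h • v - z = (y - z) + h • v by abel] at hdist
  calc infDist (y + h • v) K ^ 2 ≤ ‖(y - z) + h • v‖ ^ 2 := by gcongr; exact infDist_nonneg
    _ ≤ infDist y K ^ 2 + (h * ‖v‖) ^ 2 := by
      rw [norm_add_sq_real, hyz, dist_eq_norm, norm_smul, Real.norm_of_nonneg hh]; linarith

end InnerProductSpace

lemma norm_le_of_mem_smul_set {F : Type*} [NormedAddCommGroup F] [NormedSpace ℝ F] {A : Set F}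
    {M t : ℝ} (hM : ∀ a ∈ A, ‖a‖ ≤ M) (ht : 0 ≤ t) {x : F} (hx : x ∈ t • A) : ‖x‖ ≤ t * M := by
  obtain ⟨a, ha, rfl⟩ := hx
  rw [norm_smul, Real.norm_of_nonneg ht]
  exact mul_le_mul_of_nonneg_left (hM a ha) ht

lemma exists_euler_iterate {F : Type*} [NormedAddCommGroup F] [InnerProductSpace ℝ F]
    [ProperSpace F] {K A : Set F} (hK : IsClosed K) {x₀ : F} (hx₀ : x₀ ∈ K) (hA : Convex ℝ A)
    {M r : ℝ} (hM₀ : 0 ≤ M) (hM : ∀ a ∈ A, ‖a‖ ≤ M)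
    (hdir : ∀ z ∈ K, dist z x₀ < r → (A ∩ closure (convexHull ℝ (contCone K z))).Nonempty)
    {h : ℝ} (hh : 0 ≤ h) (N : ℕ) (hN : 2 * (N * h * M) < r) :
    ∃ y, y - x₀ ∈ (N * h) • A ∧ infDist y K ^ 2 ≤ N * (h * M) ^ 2 := by
  induction N with
  | zero =>
    obtain ⟨a, ha, -⟩ := hdir x₀ hx₀ (by simpa using hN)
    exact ⟨x₀, ⟨a, ha, by simp⟩, by simp [infDist_zero_of_mem hx₀]⟩
  | succ N ih =>
    have hNh : N * h * M ≤ (N + 1 : ℕ) * h * M := by gcongr; exact_mod_cast N.le_succ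
    obtain ⟨y, hyA, hyK⟩ := ih (by linarith)
    obtain ⟨z, hz, hyz⟩ := hK.exists_infDist_eq_dist ⟨x₀, hx₀⟩ y
    have hyx₀ : dist y x₀ ≤ N * h * M := by
      rw [dist_eq_norm]; exact norm_le_of_mem_smul_set hM (by positivity) hyA
    have hzr : dist z x₀ < r := by
      calc dist z x₀ ≤ dist y z + dist y x₀ := dist_triangle_left _ _ _
        _ ≤ 2 * dist y x₀ := by linarith [hyz ▸ infDist_le_dist_of_mem (x := y) hx₀]
        _ < r := by linarith
    obtain ⟨v, hvA, hvT⟩ := hdir z hz hzr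
    refine ⟨y + h • v, ?_, ?_⟩
    · rw [show y + h • v - x₀ = (y - x₀) + h • v by abel, Nat.cast_succ, add_one_mul,
        hA.add_smul (by positivity) hh]
      exact add_mem_add hyA (smul_mem_smul_set hvA)
    · calc infDist (y + h • v) K ^ 2 ≤ infDist y K ^ 2 + (h * ‖v‖) ^ 2 :=
            infDist_add_smul_sq_le hz hyz hvT hh
        _ ≤ N * (h * M) ^ 2 + (h * M) ^ 2 := by gcongr; exact hM v hvA
        _ = (N + 1 : ℕ) * (h * M) ^ 2 := by push_cast; ring

lemma exists_infDist_smul_sq_le {F : Type*} [NormedAddCommGroup F] [InnerProductSpace ℝ F]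
    [ProperSpace F] {K A : Set F} (hK : IsClosed K) {x₀ : F} (hx₀ : x₀ ∈ K) (hA : Convex ℝ A)
    {M r : ℝ} (hM₀ : 0 ≤ M) (hM : ∀ a ∈ A, ‖a‖ ≤ M)
    (hdir : ∀ z ∈ K, dist z x₀ < r → (A ∩ closure (convexHull ℝ (contCone K z))).Nonempty)
    {t : ℝ} (ht : 0 ≤ t) (htr : 2 * (t * M) < r) {N : ℕ} (hN : N ≠ 0) :
    ∃ a ∈ A, infDist (x₀ + t • a) K ^ 2 ≤ (t * M) ^ 2 / N := by
  have hNt : (N : ℝ) * (t / N) = t := by field_simp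
  obtain ⟨y, ⟨a, ha, hya⟩, hyK⟩ :=
    exists_euler_iterate hK hx₀ hA hM₀ hM hdir (h := t / N) (by positivity) N (by rwa [hNt])
  rw [hNt, eq_sub_iff_add_eq'] at hya
  refine ⟨a, ha, hya ▸ hyK.trans_eq ?_⟩
  field_simp

lemma IsCompact.inter_contCone_nonempty {F : Type*} [NormedAddCommGroup F] [NormedSpace ℝ F]
    {S K : Set F} {x : F} (hS : IsCompact S)
    (happrox : ∀ ε > 0, ∃ g ∈ S, ∃ t, 0 < t ∧ t < ε ∧ infDist (x + t • g) K < ε * t) :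
    (S ∩ contCone K x).Nonempty := by
  choose g hgS t ht htε hg using fun k : ℕ => happrox (1 / (k + 1)) Nat.one_div_pos_of_nat
  obtain ⟨v, hvS, φ, hφ, hgv⟩ := hS.tendsto_subseq hgS
  refine ⟨v, hvS, fun ε hε => ?_⟩
  have hsmall : ∀ᶠ i in atTop, 1 / ((φ i : ℝ) + 1) < ε / 2 :=
    (tendsto_one_div_add_atTop_nhds_zero_nat.comp hφ.tendsto_atTop).eventually
      (gt_mem_nhds (half_pos hε))
  have hclose : ∀ᶠ i in atTop, dist v (g (φ i)) < ε / 2 :=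
    (hgv.eventually (ball_mem_nhds v (half_pos hε))).mono fun _ h => by rwa [dist_comm]
  obtain ⟨i, hi, hvg⟩ := (hsmall.and hclose).exists
  set j := φ i
  refine ⟨t j, ht j, (htε j).trans (hi.trans (half_lt_self hε)), ?_⟩
  calc infDist (x + t j • v) K ≤ infDist (x + t j • g j) K + dist (x + t j • v) (x + t j • g j) :=
        infDist_le_infDist_add_dist
    _ = infDist (x + t j • g j) K + t j * dist v (g j) := by
        rw [dist_add_left, dist_smul₀, Real.norm_of_nonneg (ht j).le]
    _ < ε / 2 * t j + t j * (ε / 2) :=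
        add_lt_add ((hg j).trans_le (by gcongr; exact (ht j).le)) (by gcongr; exact ht j)
    _ = ε * t j := by ring

lemma USCOn.exists_subset_add_ball {n : ℕ} {K : Set (Euc n)} {G : Euc n → Set (Euc n)}
    (husc : USCOn K G) {x : Euc n} (hx : x ∈ K) {δ : ℝ} (hδ : 0 < δ) :
    ∃ r > 0, ∀ y ∈ K, dist y x < r → G y ⊆ G x + ball 0 δ := by
  obtain ⟨U, hU, hUV⟩ := husc x hx _ isOpen_thickening (self_subset_thickening hδ (G x))
  obtain ⟨r, hr, hrU⟩ := Metric.mem_nhds_iff.1 hU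
  exact ⟨r, hr, fun y hy hyr => add_ball_zero δ (G x) ▸ hUV y ⟨hrU hyr, hy⟩⟩

lemma exists_infDist_add_smul_lt {n : ℕ} {K : Set (Euc n)} (hK : IsClosed K)
    {G : Euc n → Set (Euc n)} (husc : USCOn K G) {x₀ : Euc n} (hx₀ : x₀ ∈ K)
    (hcpt : IsCompact (G x₀)) (hconv : Convex ℝ (G x₀))
    (hcc : ∀ x ∈ K, (G x ∩ closure (convexHull ℝ (contCone K x))).Nonempty)
    {ε : ℝ} (hε : 0 < ε) :
    ∃ g ∈ G x₀, ∃ t, 0 < t ∧ t < ε ∧ infDist (x₀ + t • g) K < ε * t := by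
  set δ := ε / 2
  have hδ : 0 < δ := half_pos hε
  obtain ⟨M₀, hM₀⟩ :=
    isBounded_iff_forall_norm_le.1 (hcpt.isBounded.add (isBounded_ball (x := 0) (r := δ)))
  set M := max M₀ 1
  have hM : 0 < M := lt_max_of_lt_right one_pos
  obtain ⟨r, hr, hGA⟩ := husc.exists_subset_add_ball hx₀ hδ
  set t := min (ε / 2) (r / (4 * M))
  have ht : 0 < t := lt_min hδ (by positivity)
  have htr : 2 * (t * M) < r := by
    have : t * M ≤ r / 4 :=
      calc t * M ≤ r / (4 * M) * M := by gcongr; exact min_le_right _ _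
        _ = r / 4 := by field_simp
    linarith
  obtain ⟨N, hN⟩ := exists_nat_gt (M ^ 2 / δ ^ 2)
  have hN₀ : (0 : ℝ) < N := lt_trans (by positivity) hN
  obtain ⟨a, ha, hdist⟩ := exists_infDist_smul_sq_le hK hx₀ (hconv.add (convex_ball 0 δ))
    hM.le (fun a ha => (hM₀ a ha).trans (le_max_left _ _))
    (fun z hz hzr => (hcc z hz).mono (inter_subset_inter_left _ (hGA z hz hzr)))
    ht.le htr (by exact_mod_cast hN₀.ne')
  have hya : infDist (x₀ + t • a) K < δ * t := by
    refine lt_of_pow_lt_pow_left₀ 2 (by positivity) (hdist.trans_lt ?_)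
    rw [div_lt_iff₀ hN₀]
    rw [div_lt_iff₀ (by positivity)] at hN
    nlinarith [mul_pos (pow_pos ht 2) (sub_pos.2 hN)]
  obtain ⟨g, hg, b, hb, rfl⟩ := ha
  refine ⟨g, hg, t, ht, (min_le_left _ _).trans_lt (half_lt_self hε), ?_⟩
  calc infDist (x₀ + t • g) K
      ≤ infDist (x₀ + t • (g + b)) K + dist (x₀ + t • g) (x₀ + t • (g + b)) :=
        infDist_le_infDist_add_dist
    _ = infDist (x₀ + t • (g + b)) K + t * ‖b‖ := by
        rw [dist_add_left, dist_smul₀, Real.norm_of_nonneg ht.le, dist_self_add_right]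
    _ < δ * t + t * δ := by gcongr; exact mem_ball_zero_iff.1 hb
    _ = ε * t := by ring

theorem stmt4 {n : ℕ} (K : Set (Euc n)) (hK : IsClosed K) (G : Euc n → Set (Euc n))
    (husc : USCOn K G)
    (hcpt : ∀ x ∈ K, IsCompact (G x))
    (hconv : ∀ x ∈ K, Convex ℝ (G x)) :
    (∀ x ∈ K, (G x ∩ contCone K x).Nonempty) ↔
    (∀ x ∈ K, (G x ∩ closure (convexHull ℝ (contCone K x))).Nonempty) := by
  refine ⟨fun H x hx => (H x hx).mono ?_, fun H x hx => ?_⟩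
  · exact inter_subset_inter_right _ (subset_convexHull ℝ _ |>.trans subset_closure)
  · exact (hcpt x hx).inter_contCone_nonempty fun ε hε =>
      exists_infDist_add_smul_lt hK husc hx (hcpt x hx) (hconv x hx) H hε
end
end

section
/- Let K ⊆ ℝⁿ be closed and G : K ⇉ ℝⁿ upper semicontinuous with compact convex values. If for every x ∈ K there exist ε > 0 and an absolutely continuous solution y : [0,ε) → K of the differential inclusion y'(t) ∈ G(y(t)) a.e. with y(0) = x that remains in K, then K is a viability domain of G, i.e., G(x) ∩ T_K(x) ≠ ∅ for all x ∈ K. -/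
open Filter Topology Metric Set
open scoped RealInnerProductSpace

noncomputable section

/-!
Upper semicontinuity of `G` at `x` puts `y' s ∈ G (y s)` inside the `δ`-thickening of `G x` for
all small `s`, so by convexity the difference quotients `(y t - x) / t`, being averages of `y'`,
lie in the closed `δ`-thickening of `G x` for small `t`. Compactness of `G x` yields a cluster
point `w ∈ G x` of these quotients as `t → 0⁺`, and `x + t • w` stays close to `y t ∈ K`, which
makes `w` a contingent direction of `K` at `x`.
-/

open MeasureTheory

theorem Convex.interval_average_mem {E : Type*} [NormedAddCommGroup E] [NormedSpace ℝ E]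
    [CompleteSpace E] {C : Set E} (hC : Convex ℝ C) (hCc : IsClosed C) {f : ℝ → E} {a b : ℝ}
    (hab : a < b) (hf : IntervalIntegrable f volume a b)
    (hfC : ∀ᵐ s ∂volume.restrict (Ioc a b), f s ∈ C) : ⨍ s in a..b, f s ∈ C := by
  rw [uIoc_of_le hab.le]
  exact hC.set_average_mem hCc (by simp [hab]) (by simp) hfC hf.1

theorem tendsto_nhdsGT_of_eq_add_integral {E : Type*} [NormedAddCommGroup E] [NormedSpace ℝ E]
    {y y' : ℝ → E} {x : E} {b : ℝ} (hb : 0 < b) (hi : IntervalIntegrable y' volume 0 b)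
    (hy : ∀ t ∈ Ioo 0 b, y t = x + ∫ s in (0:ℝ)..t, y' s) : Tendsto y (𝓝[>] 0) (𝓝 x) := by
  have hF : ContinuousWithinAt (fun t => ∫ s in (0:ℝ)..t, y' s) (Ioi 0) 0 :=
    ((intervalIntegral.continuousOn_primitive_interval' hi left_mem_uIcc) 0
      left_mem_uIcc).mono_of_mem_nhdsWithin
      (mem_of_superset (Ioo_mem_nhdsGT hb) (Ioo_subset_Icc_self.trans Icc_subset_uIcc))
  have hlim := (hF.const_add x).tendsto
  rw [intervalIntegral.integral_same, add_zero] at hlim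
  refine hlim.congr' ?_
  filter_upwards [Ioo_mem_nhdsGT hb] with t ht using (hy t ht).symm

theorem IsCompact.exists_mapClusterPt_of_eventually_mem_cthickening {α ι : Type*}
    [MetricSpace α] [ProperSpace α] {C : Set α} (hC : IsCompact C) {l : Filter ι} [l.NeBot]
    {v : ι → α} (hv : ∀ δ > 0, ∀ᶠ i in l, v i ∈ cthickening δ C) :
    ∃ w ∈ C, MapClusterPt w l v := by
  obtain ⟨w, -, hw⟩ := hC.cthickening.exists_mapClusterPt_of_frequently (hv 1 one_pos).frequently
  refine ⟨w, ?_, hw⟩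
  rw [← hC.isClosed.closure_eq, closure_eq_iInter_cthickening]
  exact mem_iInter₂.2 fun δ hδ => isClosed_cthickening.mem_of_mapClusterPt hw (hv δ hδ)

theorem mem_contCone_of_mapClusterPt {F : Type*} [NormedAddCommGroup F] [NormedSpace ℝ F]
    {K : Set F} {x w : F} {v : ℝ → F} (hK : ∀ᶠ t in 𝓝[>] 0, x + t • v t ∈ K)
    (hw : MapClusterPt w (𝓝[>] 0) v) : w ∈ contCone K x := by
  intro ε hε
  obtain ⟨t, hvt, htK, ht⟩ :=
    ((hw.frequently (ball_mem_nhds w hε)).and_eventually (hK.and (Ioo_mem_nhdsGT hε))).exists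
  refine ⟨t, ht.1, ht.2, ?_⟩
  calc infDist (x + t • w) K ≤ dist (x + t • w) (x + t • v t) := infDist_le_dist_of_mem htK
    _ = t * dist (v t) w := by
      rw [dist_add_left, dist_smul₀, Real.norm_of_nonneg ht.1.le, dist_comm]
    _ < ε * t := by rw [mul_comm]; exact mul_lt_mul_of_pos_right hvt ht.1

theorem eventually_slope_mem_cthickening {n : ℕ} {K : Set (Euc n)} {G : Euc n → Set (Euc n)}
    {x : Euc n} (husc : USCOn K G) (hx : x ∈ K) (hconv : Convex ℝ (G x)) {ε : ℝ} (hε : 0 < ε)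
    {y y' : ℝ → Euc n} (hyK : ∀ t ∈ Ico (0:ℝ) ε, y t ∈ K)
    (hint : ∀ t ∈ Ico (0:ℝ) ε, IntervalIntegrable y' volume 0 t ∧
      y t = x + ∫ s in (0:ℝ)..t, y' s)
    (hae : ∀ᵐ t ∂volume.restrict (Ioo (0:ℝ) ε), y' t ∈ G (y t)) {δ : ℝ} (hδ : 0 < δ) :
    ∀ᶠ t in 𝓝[>] 0, t⁻¹ • (y t - x) ∈ cthickening δ (G x) := by
  obtain ⟨U, hU, hGU⟩ := husc x hx _ isOpen_thickening (self_subset_thickening hδ _)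
  have hyx : Tendsto y (𝓝[>] 0) (𝓝 x) :=
    tendsto_nhdsGT_of_eq_add_integral (half_pos hε) (hint _ ⟨by linarith, by linarith⟩).1
      fun t ht => (hint t ⟨ht.1.le, ht.2.trans (half_lt_self hε)⟩).2
  obtain ⟨r, hr, hrU⟩ :=
    mem_nhdsGT_iff_exists_Ioo_subset.1 ((hyx.eventually_mem hU).and (Ioo_mem_nhdsGT hε))
  filter_upwards [Ioo_mem_nhdsGT hr] with t ht
  have hsub : Ioc 0 t ⊆ Ioo 0 r := Ioc_subset_Ioo_right ht.2
  have htε : t ∈ Ico 0 ε := Ioo_subset_Ico_self (hrU ht).2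
  have hy'G : ∀ᵐ s ∂volume.restrict (Ioc 0 t), y' s ∈ cthickening δ (G x) := by
    filter_upwards [ae_restrict_of_ae_restrict_of_subset (hsub.trans fun s hs => (hrU hs).2) hae,
      ae_restrict_mem measurableSet_Ioc] with s hs hst
    obtain ⟨hsU, hsε⟩ := hrU (hsub hst)
    exact thickening_subset_cthickening _ _ (hGU (y s) ⟨hsU, hyK s (Ioo_subset_Ico_self hsε)⟩ hs)
  have havg := (hconv.cthickening δ).interval_average_mem isClosed_cthickening ht.1
    (hint t htε).1 hy'G
  rwa [interval_average_eq, sub_zero, ← add_sub_cancel_left x (∫ s in (0:ℝ)..t, y' s),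
    ← (hint t htε).2] at havg

theorem stmt5_general {n : ℕ} (K : Set (Euc n)) (G : Euc n → Set (Euc n))
    (husc : USCOn K G)
    (hcpt : ∀ x ∈ K, IsCompact (G x))
    (hconv : ∀ x ∈ K, Convex ℝ (G x))
    (hsol : ∀ x ∈ K, ∃ ε : ℝ, 0 < ε ∧ ∃ y y' : ℝ → Euc n,
      y 0 = x ∧
      (∀ t ∈ Set.Ico (0:ℝ) ε, y t ∈ K) ∧
      (∀ t ∈ Set.Ico (0:ℝ) ε, IntervalIntegrable y' MeasureTheory.volume 0 t ∧
        y t = x + ∫ s in (0:ℝ)..t, y' s) ∧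
      (∀ᵐ t ∂(MeasureTheory.volume.restrict (Set.Ioo (0:ℝ) ε)), y' t ∈ G (y t))) :
    ∀ x ∈ K, (G x ∩ contCone K x).Nonempty := by
  intro x hx
  obtain ⟨ε, hε, y, y', -, hyK, hint, hae⟩ := hsol x hx
  obtain ⟨w, hwG, hw⟩ := (hcpt x hx).exists_mapClusterPt_of_eventually_mem_cthickening
    (l := 𝓝[>] (0:ℝ)) fun δ hδ =>
      eventually_slope_mem_cthickening husc hx (hconv x hx) hε hyK hint hae hδ
  refine ⟨w, hwG, mem_contCone_of_mapClusterPt ?_ hw⟩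
  filter_upwards [Ioo_mem_nhdsGT hε] with t ht
  rw [smul_inv_smul₀ ht.1.ne', add_sub_cancel]
  exact hyK t (Ioo_subset_Ico_self ht)

theorem stmt5 {n : ℕ} (K : Set (Euc n)) (hK : IsClosed K) (G : Euc n → Set (Euc n))
    (husc : USCOn K G)
    (hcpt : ∀ x ∈ K, IsCompact (G x))
    (hconv : ∀ x ∈ K, Convex ℝ (G x))
    (hsol : ∀ x ∈ K, ∃ ε : ℝ, 0 < ε ∧ ∃ y y' : ℝ → Euc n,
      y 0 = x ∧
      (∀ t ∈ Set.Ico (0:ℝ) ε, y t ∈ K) ∧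
      (∀ t ∈ Set.Ico (0:ℝ) ε, IntervalIntegrable y' MeasureTheory.volume 0 t ∧
        y t = x + ∫ s in (0:ℝ)..t, y' s) ∧
      (∀ᵐ t ∂(MeasureTheory.volume.restrict (Set.Ioo (0:ℝ) ε)), y' t ∈ G (y t))) :
    ∀ x ∈ K, (G x ∩ contCone K x).Nonempty :=
  stmt5_general K G husc hcpt hconv hsol
end
end

section
/- (Viability Theorem, key implication) Let K ⊆ ℝⁿ be closed and G : K ⇉ ℝⁿ upper semicontinuous with compact convex values. If G(x) ∩ T_K(x) ≠ ∅ for every x ∈ K, then for every x₀ ∈ K there exist ε > 0 and an absolutely continuous function y : [0,ε) → K with y(0) = x₀ and y'(t) ∈ G(y(t)) for almost every t ∈ [0,ε). -/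
open Filter Topology Metric Set
open scoped RealInnerProductSpace

noncomputable section

/-!
Approximate solutions are built as Euler polygons. By upper semicontinuity `G` is bounded by some
`M` on `K` near `x₀`. Compactness of `K ∩ closedBall x₀ r` makes the tangency condition uniform:
for a given precision `δ` there is `h₀ > 0` such that from every point `x` one can jump, in a time
between `h₀` and `δ`, to a point of `K` with a velocity `δ`-close to a value of `G` at a point
`δ`-close to `x`. Since each jump takes time at least `h₀`, finitely many jumps cover a fixed
interval `[0, T]`, giving for every `ε > 0` an `ε`-approximate viable solution whose velocity is
bounded by `M + 1`.

These approximations are uniformly Lipschitz, so along an ultrafilter they converge pointwise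
(Tychonoff) to a Lipschitz `y` with values in `K`. Near `t`, the difference quotients of `y` are
averages of approximate velocities, hence lie in the closed convex hull of the values of `G` near
`y t`. Separating a point outside the compact convex set `G (y t)` by a hyperplane and using upper
semicontinuity shows that these hulls shrink to `G (y t)`; so `y' t ∈ G (y t)` wherever `y` is
differentiable, that is almost everywhere by Rademacher's theorem, and `y` is the integral of `y'`
because Lipschitz functions are absolutely continuous.
-/

open MeasureTheory intervalIntegral Finset
open scoped NNReal

lemma exists_tendsto_ultrafilter_of_lipschitzWith {X : Type*} [MetricSpace X]
    [ProperSpace X] {ι : Type*} (𝒰 : Ultrafilter ι) {Y : ι → ℝ → X} {L : ℝ≥0}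
    (hY : ∀ k, LipschitzWith L (Y k)) {x₀ : X} (hY0 : ∀ k, Y k 0 = x₀) :
    ∃ y, LipschitzWith L y ∧ y 0 = x₀ ∧ Tendsto Y 𝒰 (𝓝 y) := by
  have hcpt : IsCompact (univ.pi fun t : ℝ => closedBall x₀ (L * |t|)) :=
    isCompact_univ_pi fun _ => isCompact_closedBall _ _
  obtain ⟨y, hy, hlim⟩ := hcpt.ultrafilter_le_nhds (𝒰.map Y) <| by
    rw [Ultrafilter.coe_map, le_principal_iff]
    refine Filter.mem_map.2 (univ_mem' fun k t _ => ?_)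
    simpa [hY0, Real.dist_eq] using (hY k).dist_le_mul t 0
  exact ⟨y, (isClosed_setOfPred_lipschitzWith L).mem_of_tendsto hlim (.of_forall hY),
    by simpa using hy 0 trivial, hlim⟩

variable {E : Type*} [NormedAddCommGroup E]

def nearbyValues (K : Set E) (G : E → Set E) (x : E) (η : ℝ) : Set E :=
  {u | ∃ z ∈ K, ‖z - x‖ ≤ η ∧ ∃ v ∈ G z, ‖v - u‖ ≤ η}

section nearbyValues

variable {K : Set E} {G : E → Set E} {x x' u : E} {η η' : ℝ}

lemma mem_nearbyValues_of_le (hu : u ∈ nearbyValues K G x' η') (hη : ‖x' - x‖ + η' ≤ η) :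
    u ∈ nearbyValues K G x η := by
  obtain ⟨z, hzK, hzx, v, hvG, hvu⟩ := hu
  refine ⟨z, hzK, ?_, v, hvG, hvu.trans (by linarith [norm_nonneg (x' - x)])⟩
  linarith [norm_sub_le_norm_sub_add_norm_sub z x' x]

lemma infDist_le_of_mem_nearbyValues (hu : u ∈ nearbyValues K G x η) : infDist x K ≤ η := by
  obtain ⟨z, hzK, hzx, -⟩ := hu
  exact (infDist_le_dist_of_mem hzK).trans (by rwa [dist_comm, dist_eq_norm])

lemma norm_le_of_mem_nearbyValues {x₀ : E} {r M : ℝ}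
    (hM : ∀ z ∈ K ∩ closedBall x₀ r, ∀ v ∈ G z, ‖v‖ ≤ M) (hu : u ∈ nearbyValues K G x η)
    (hx : ‖x - x₀‖ + η ≤ r) : ‖u‖ ≤ M + η := by
  obtain ⟨z, hzK, hzx, v, hvG, hvu⟩ := hu
  have hz : z ∈ closedBall x₀ r := by
    rw [mem_closedBall, dist_eq_norm]
    linarith [norm_sub_le_norm_sub_add_norm_sub z x x₀]
  calc ‖u‖ ≤ ‖v‖ + ‖v - u‖ := norm_le_insert v u
    _ ≤ M + η := add_le_add (hM z ⟨hzK, hz⟩ v hvG) hvu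

end nearbyValues

def stepFun (t : ℕ → ℝ) (c : ℕ → E) (N : ℕ) (s : ℝ) : E :=
  ∑ i ∈ range N, (Ioc (t i) (t (i + 1))).indicator (fun _ => c i) s

section stepFun

variable {t : ℕ → ℝ} {c : ℕ → E} {N : ℕ}

lemma stronglyMeasurable_stepFun : StronglyMeasurable (stepFun t c N) :=
  Finset.stronglyMeasurable_fun_sum _ fun _ _ =>
    stronglyMeasurable_const.indicator measurableSet_Ioc

lemma norm_stepFun_le_sum (s : ℝ) : ‖stepFun t c N s‖ ≤ ∑ i ∈ range N, ‖c i‖ :=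
  (norm_sum_le _ _).trans (sum_le_sum fun _ _ => norm_indicator_le_norm_self _ _)

lemma intervalIntegrable_stepFun (a b : ℝ) : IntervalIntegrable (stepFun t c N) volume a b :=
  intervalIntegrable_const.mono_fun' stronglyMeasurable_stepFun.aestronglyMeasurable
    (ae_of_all _ norm_stepFun_le_sum)

lemma stepFun_eq_of_mem (ht : Monotone t) {i : ℕ} (hi : i < N) {s : ℝ}
    (hs : s ∈ Ioc (t i) (t (i + 1))) : stepFun t c N s = c i := by
  rw [stepFun, sum_eq_single_of_mem i (mem_range.2 hi), indicator_of_mem hs]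
  exact fun j _ hji => indicator_of_notMem
    (disjoint_left.1 (ht.pairwise_disjoint_on_Ioc_succ hji.symm) hs) _

lemma norm_stepFun_le (ht : Monotone t) {L : ℝ} (hL : 0 ≤ L) (hc : ∀ i < N, ‖c i‖ ≤ L)
    (s : ℝ) : ‖stepFun t c N s‖ ≤ L := by
  by_cases hs : ∃ i < N, s ∈ Ioc (t i) (t (i + 1))
  · obtain ⟨i, hi, hs⟩ := hs
    rw [stepFun_eq_of_mem ht hi hs]
    exact hc i hi
  · push Not at hs
    rwa [stepFun, sum_eq_zero fun i hi => indicator_of_notMem (hs i (mem_range.1 hi)) _,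
      norm_zero]

end stepFun

variable [NormedSpace ℝ E]

lemma integral_stepFun [CompleteSpace E] {t : ℕ → ℝ} (ht : Monotone t) (c : ℕ → E) {N i : ℕ}
    (hi : i ≤ N) : ∫ s in t 0..t i, stepFun t c N s = ∑ j ∈ range i, (t (j + 1) - t j) • c j := by
  induction i with
  | zero => simp
  | succ i ih =>
    rw [← integral_add_adjacent_intervals (intervalIntegrable_stepFun _ _)
      (intervalIntegrable_stepFun _ _), ih (by omega), sum_range_succ,
      ← intervalIntegral.integral_const]
    refine congrArg _ (integral_congr_ae (ae_of_all _ fun s hs => ?_))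
    rw [uIoc_of_le (ht i.le_succ)] at hs
    exact stepFun_eq_of_mem ht (by omega) hs

section Lipschitz

variable {f : ℝ → E} {C : ℝ≥0}

lemma lipschitzWith_const_add_integral {w : ℝ → E} (hw : ∀ a b, IntervalIntegrable w volume a b)
    (hC : ∀ s, ‖w s‖ ≤ C) (x₀ : E) (a : ℝ) : LipschitzWith C fun s => x₀ + ∫ u in a..s, w u :=
  LipschitzWith.of_dist_le_mul fun s s' => by
    rw [dist_add_left, dist_eq_norm, integral_interval_sub_left (hw a s) (hw a s'), Real.dist_eq]
    exact norm_integral_le_of_norm_le_const fun u _ => hC u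

variable [CompleteSpace E]

lemma LipschitzWith.intervalIntegrable_deriv (hf : LipschitzWith C f) (a b : ℝ) :
    IntervalIntegrable (deriv f) volume a b :=
  (intervalIntegrable_const (c := (C : ℝ))).mono_fun'
    (aestronglyMeasurable_deriv f _) (ae_of_all _ fun _ => norm_deriv_le_of_lipschitz hf)

lemma LipschitzWith.integral_deriv_eq_sub [FiniteDimensional ℝ E] (hf : LipschitzWith C f)
    (a b : ℝ) : ∫ t in a..b, deriv f t = f b - f a := by
  refine (SeparatingDual.eq_iff_forall_dual_eq (R := ℝ)).2 fun φ => ?_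
  have hφf : LipschitzWith (‖φ‖₊ * C) (φ ∘ f) := φ.lipschitz.comp hf
  rw [← φ.intervalIntegral_comp_comm (hf.intervalIntegrable_deriv a b), map_sub]
  refine Eq.trans ?_ hφf.lipschitzOnWith.absolutelyContinuousOnInterval.integral_deriv_eq_sub
  refine integral_congr_ae ?_
  filter_upwards [hf.ae_differentiableAt] with t ht _
  exact (φ.hasFDerivAt.comp_hasDerivAt t ht.hasDerivAt).deriv.symm

end Lipschitz

lemma inv_smul_integral_mem_closure_convexHull [CompleteSpace E] {w : ℝ → E} {A : Set E}
    {a b : ℝ} (hab : a < b) (hw : IntervalIntegrable w volume a b) (hA : ∀ s ∈ Ioc a b, w s ∈ A) :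
    (b - a)⁻¹ • ∫ s in a..b, w s ∈ closure (convexHull ℝ A) := by
  rw [← interval_average_eq, uIoc_of_le hab.le]
  exact (convex_convexHull ℝ A).set_average_mem_closure (by simp [hab]) (by simp)
    ((ae_restrict_mem measurableSet_Ioc).mono fun s hs => subset_convexHull ℝ A (hA s hs))
    ((intervalIntegrable_iff_integrableOn_Ioc_of_le hab.le).1 hw)

lemma norm_sub_inv_smul_sub (v x x' : E) {h : ℝ} (hh : 0 < h) :
    ‖v - h⁻¹ • (x' - x)‖ = h⁻¹ * ‖x' - (x + h • v)‖ := by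
  have : v - h⁻¹ • (x' - x) = -(h⁻¹ • (x' - (x + h • v))) := by
    rw [smul_sub, smul_sub, smul_add, inv_smul_smul₀ hh.ne']
    abel
  rw [this, norm_neg, norm_smul, norm_inv, Real.norm_of_nonneg hh.le]

lemma exists_euler_scheme {S : Set E} {x₀ : E} (hx₀ : x₀ ∈ S) {Q : E → E → Prop}
    {L T h₀ δ : ℝ} (hL : 0 ≤ L) (hh₀ : 0 < h₀)
    (hstep : ∀ x ∈ S, ‖x - x₀‖ ≤ L * T →
      ∃ h ∈ Icc h₀ δ, ∃ c, ‖c‖ ≤ L ∧ x + h • c ∈ S ∧ Q x c) :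
    ∃ (N : ℕ) (t : ℕ → ℝ) (c : ℕ → E), Monotone t ∧ t 0 = 0 ∧ T < t N ∧
      ∀ i < N, t (i + 1) - t i ≤ δ ∧ ‖c i‖ ≤ L ∧
        Q (x₀ + ∑ j ∈ range i, (t (j + 1) - t j) • c j) (c i) := by
  have htotal (x : E) : ∃ h ≥ h₀, ∃ c, x ∈ S → ‖x - x₀‖ ≤ L * T →
      h ≤ δ ∧ ‖c‖ ≤ L ∧ x + h • c ∈ S ∧ Q x c := by
    by_cases hx : x ∈ S ∧ ‖x - x₀‖ ≤ L * T
    · obtain ⟨h, hh, c, hc⟩ := hstep x hx.1 hx.2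
      exact ⟨h, hh.1, c, fun _ _ => ⟨hh.2, hc⟩⟩
    · exact ⟨h₀, le_rfl, 0, fun h₁ h₂ => absurd ⟨h₁, h₂⟩ hx⟩
  choose hs hs_ge cs hcs using htotal
  let X : ℕ → E := fun i => Nat.rec x₀ (fun _ x => x + hs x • cs x) i
  let t : ℕ → ℝ := fun i => ∑ j ∈ range i, hs (X j)
  have ht_succ (i : ℕ) : t (i + 1) - t i = hs (X i) := by
    simp only [t, sum_range_succ, add_sub_cancel_left]
  have hX (i : ℕ) : X i = x₀ + ∑ j ∈ range i, (t (j + 1) - t j) • cs (X j) := by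
    induction i with
    | zero => simp [X]
    | succ i ih => rw [sum_range_succ, ← add_assoc, ← ih, ht_succ]
  have ht_mono : Monotone t := monotone_nat_of_le_succ fun i => by
    linarith [ht_succ i, hs_ge (X i)]
  have hinv (i : ℕ) (hi : t i ≤ T) : X i ∈ S ∧ ‖X i - x₀‖ ≤ L * t i := by
    induction i with
    | zero => simp [X, t, hx₀]
    | succ i ih =>
      have hti := (ht_mono i.le_succ).trans hi
      obtain ⟨hXS, hXnorm⟩ := ih hti
      obtain ⟨-, hcL, hXS', -⟩ := hcs (X i) hXS (hXnorm.trans (by gcongr))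
      refine ⟨hXS', ?_⟩
      have hh := hh₀.le.trans (hs_ge (X i))
      calc ‖X (i + 1) - x₀‖ = ‖(X i - x₀) + hs (X i) • cs (X i)‖ := by
            simp only [X]
            abel_nf
        _ ≤ L * t i + hs (X i) * L := by
          grw [norm_add_le, norm_smul, Real.norm_of_nonneg hh, hXnorm, hcL]
        _ = L * t (i + 1) := by rw [← ht_succ]; ring
  have hN : ∃ N, T < t N := by
    obtain ⟨N, hN⟩ := exists_nat_gt (T / h₀)
    refine ⟨N, (div_lt_iff₀ hh₀).1 hN |>.trans_le ?_⟩
    simpa [t] using card_nsmul_le_sum (range N) (fun j => hs (X j)) h₀ fun j _ => hs_ge (X j)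
  refine ⟨Nat.find hN, t, fun i => cs (X i), ht_mono, by simp [t], Nat.find_spec hN,
    fun i hi => ?_⟩
  have hti := not_lt.1 (Nat.find_min hN hi)
  obtain ⟨hXS, hXnorm⟩ := hinv i hti
  obtain ⟨hδ, hcL, -, hQ⟩ := hcs (X i) hXS (hXnorm.trans (by gcongr))
  exact ⟨(ht_succ i).symm ▸ hδ, hcL, hX i ▸ hQ⟩

section viability

variable {K : Set E} {G : E → Set E}

lemma IsCompact.exists_uniform_tangent_step {K₀ : Set E} (hK₀ : IsCompact K₀) (hK₀K : K₀ ⊆ K)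
    (hviab : ∀ x ∈ K₀, (G x ∩ contCone K x).Nonempty) {δ : ℝ} (hδ : 0 < δ) :
    ∃ h₀ > 0, ∀ x ∈ K₀, ∃ h ∈ Icc h₀ δ, ∃ c ∈ nearbyValues K G x δ, x + h • c ∈ K := by
  have htan (z : K₀) : ∃ h v x', 0 < h ∧ h < min (δ / 2) 1 ∧ v ∈ G z ∧ x' ∈ K ∧
      ‖x' - (z + h • v)‖ < δ / 2 * h := by
    obtain ⟨v, hvG, hvT⟩ := hviab z z.2
    obtain ⟨h, hh, hhδ, hdist⟩ := hvT (min (δ / 2) 1) (by positivity)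
    obtain ⟨x', hx'K, hx'⟩ := (infDist_lt_iff ⟨_, hK₀K z.2⟩).1 hdist
    refine ⟨h, v, x', hh, hhδ, hvG, hx'K, ?_⟩
    rw [← dist_eq_norm, dist_comm]
    exact hx'.trans_le (mul_le_mul_of_nonneg_right (min_le_left _ _) hh.le)
  choose hz vz xz hpos hlt hvG hxK hxz using htan
  -- a tangent step chosen at `z` remains a good step from every `x` in a small ball around `z`
  obtain ⟨cover, hcover⟩ := hK₀.elim_finite_subcover (fun z : K₀ => ball (z : E) (δ / 2 * hz z))
    (fun _ => isOpen_ball) fun x hx => mem_iUnion.2 ⟨⟨x, hx⟩, mem_ball_self (by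
      have := hpos ⟨x, hx⟩; positivity)⟩
  obtain ⟨h₀, hh₀, hh₀pos⟩ := ((cover.eventually_all.2 fun z _ =>
    (eventually_le_nhds (hpos z)).filter_mono nhdsWithin_le_nhds).and
    (self_mem_nhdsWithin (s := Ioi (0 : ℝ)) (a := 0))).exists
  refine ⟨h₀, hh₀pos, fun x hx => ?_⟩
  obtain ⟨z, hzc, hxz'⟩ := mem_iUnion₂.1 (hcover hx)
  rw [mem_ball, dist_eq_norm] at hxz'
  obtain ⟨hzδ, hz1⟩ := lt_min_iff.1 (hlt z)
  refine ⟨hz z, ⟨hh₀ z hzc, by linarith⟩, (hz z)⁻¹ • (xz z - x),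
    ⟨z, hK₀K z.2, ?_, vz z, hvG z, ?_⟩, ?_⟩
  · rw [norm_sub_rev]
    nlinarith [hpos z]
  · rw [norm_sub_inv_smul_sub _ _ _ (hpos z), inv_mul_le_iff₀ (hpos z)]
    calc ‖xz z - (x + hz z • vz z)‖ = ‖(xz z - (z + hz z • vz z)) + (z - x)‖ := by
          congr 1; abel
      _ ≤ ‖xz z - (z + hz z • vz z)‖ + ‖x - z‖ := by
          rw [norm_sub_rev x]; exact norm_add_le _ _
      _ ≤ hz z * δ := by linarith [hxz z]
  · rw [smul_inv_smul₀ (hpos z).ne', add_sub_cancel]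
    exact hxK z

lemma exists_approx_velocity [ProperSpace E] (hK : IsClosed K)
    (hviab : ∀ x ∈ K, (G x ∩ contCone K x).Nonempty) {x₀ : E} (hx₀ : x₀ ∈ K) {r : ℝ}
    (hr : 0 < r) {M : ℝ≥0} (hM : ∀ z ∈ K ∩ closedBall x₀ r, ∀ v ∈ G z, ‖v‖ ≤ M) {ε : ℝ}
    (hε : 0 < ε) :
    ∃ w : ℝ → E, StronglyMeasurable w ∧ (∀ s, ‖w s‖ ≤ (M + 1 : ℝ≥0)) ∧
      ∀ s ∈ Ioc 0 (r / (2 * (M + 1))),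
        w s ∈ nearbyValues K G (x₀ + ∫ u in (0 : ℝ)..s, w u) ε := by
  set δ := min (min 1 (r / 2)) (ε / (M + 2))
  have hδ : 0 < δ := by positivity
  have hδ1 : δ ≤ 1 := (min_le_left _ _).trans (min_le_left _ _)
  have hδr : δ ≤ r / 2 := (min_le_left _ _).trans (min_le_right _ _)
  have hδε : (M + 2) * δ ≤ ε := by
    rw [← le_div_iff₀' (by positivity)]
    exact min_le_right _ _
  have hMT : ((M + 1 : ℝ≥0) : ℝ) * (r / (2 * (M + 1))) = r / 2 := by
    push_cast
    field_simp
  obtain ⟨h₀, hh₀, htangent⟩ := ((isCompact_closedBall x₀ (r / 2)).inter_left hK)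
    |>.exists_uniform_tangent_step inter_subset_left (fun x hx => hviab x hx.1) hδ
  obtain ⟨N, t, c, ht, ht0, hTN, hsteps⟩ := exists_euler_scheme hx₀
    (Q := fun x c => c ∈ nearbyValues K G x δ) (L := (M + 1 : ℝ≥0)) (δ := δ) (by positivity) hh₀
    fun x hxK hx => by
      rw [hMT] at hx
      obtain ⟨h, hh, c, hc, hxc⟩ := htangent x ⟨hxK, by rwa [mem_closedBall, dist_eq_norm]⟩
      refine ⟨h, hh, c, ?_, hxc, hc⟩
      push_cast
      linarith [norm_le_of_mem_nearbyValues hM hc (by linarith)]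
  have hw_le := norm_stepFun_le ht (M + 1 : ℝ≥0).2 fun i hi => (hsteps i hi).2.1
  refine ⟨stepFun t c N, stronglyMeasurable_stepFun, hw_le, fun s hs => ?_⟩
  obtain ⟨i, hi, hsi⟩ := mem_iUnion₂.1 <| Ioc_subset_biUnion_Ioc N t
    (by rw [ht0]; exact ⟨hs.1, hs.2.trans hTN.le⟩)
  replace hi := mem_range.1 hi
  obtain ⟨hδi, -, hci⟩ := hsteps i hi
  rw [← integral_stepFun ht c hi.le, ht0] at hci
  rw [stepFun_eq_of_mem ht hi hsi]
  refine mem_nearbyValues_of_le hci ?_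
  have hdist := (lipschitzWith_const_add_integral intervalIntegrable_stepFun hw_le x₀ 0).dist_le_mul
    (t i) s
  rw [dist_eq_norm, Real.dist_eq, abs_sub_comm, abs_of_pos (sub_pos.2 hsi.1)] at hdist
  have : ((M + 1 : ℝ≥0) : ℝ) * (s - t i) ≤ (M + 1) * δ := by
    push_cast
    gcongr
    linarith [hsi.2]
  linarith

lemma slope_mem_closure_convexHull_nearbyValues [CompleteSpace E] {Y w : ℝ → E} {L : ℝ≥0}
    (hY : LipschitzWith L Y) {t h ε η : ℝ} {x : E} (hh : 0 < h)
    (hw : IntervalIntegrable w volume t (t + h)) (hYw : Y (t + h) - Y t = ∫ u in t..t + h, w u)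
    (happrox : ∀ s ∈ Ioc t (t + h), w s ∈ nearbyValues K G (Y s) ε)
    (hη : ‖Y t - x‖ + L * h + ε ≤ η) :
    h⁻¹ • (Y (t + h) - Y t) ∈ closure (convexHull ℝ (nearbyValues K G x η)) := by
  have := inv_smul_integral_mem_closure_convexHull (lt_add_of_pos_right t hh) hw fun s hs =>
    mem_nearbyValues_of_le (happrox s hs) (x := x) (η := η) ?_
  · rwa [add_sub_cancel_left, ← hYw] at this
  · have hYs : ‖Y s - Y t‖ ≤ L * h := by
      rw [← dist_eq_norm]
      refine (hY.dist_le_mul s t).trans (mul_le_mul_of_nonneg_left ?_ L.2)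
      rw [Real.dist_eq, abs_of_pos (sub_pos.2 hs.1)]
      linarith [hs.2]
    linarith [norm_sub_le_norm_sub_add_norm_sub (Y s) (Y t) x]

lemma deriv_mem_closure_convexHull_of_tendsto [CompleteSpace E] {ι : Type*} {l : Filter ι}
    [l.NeBot] {ε : ι → ℝ} (hε : Tendsto ε l (𝓝 0)) {W : ι → ℝ → E} {L : ℝ≥0}
    (hW_int : ∀ k a b, IntervalIntegrable (W k) volume a b) (hW_le : ∀ k s, ‖W k s‖ ≤ L)
    {x₀ : E} {T : ℝ}
    (hW : ∀ k, ∀ s ∈ Ioc 0 T, W k s ∈ nearbyValues K G (x₀ + ∫ u in (0 : ℝ)..s, W k u) (ε k))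
    {y : ℝ → E} (hy : ∀ t, Tendsto (fun k => x₀ + ∫ u in (0 : ℝ)..t, W k u) l (𝓝 (y t)))
    {t : ℝ} (ht : t ∈ Ico 0 T) (hd : DifferentiableAt ℝ y t) {η : ℝ} (hη : 0 < η) :
    deriv y t ∈ closure (convexHull ℝ (nearbyValues K G (y t) η)) := by
  have hsmall : ∀ᶠ h in 𝓝 (0 : ℝ), t + h < T ∧ L * h < η / 2 :=
    ((tendsto_const_nhds.add tendsto_id).eventually_lt tendsto_const_nhds
      (by simpa using ht.2)).and
    ((tendsto_const_nhds.mul tendsto_id).eventually_lt tendsto_const_nhds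
      (by simpa using half_pos hη))
  refine isClosed_closure.mem_of_tendsto hd.hasDerivAt.tendsto_slope_zero_right ?_
  filter_upwards [hsmall.filter_mono nhdsWithin_le_nhds, self_mem_nhdsWithin]
    with h ⟨hhT, hhL⟩ hh
  refine isClosed_closure.mem_of_tendsto (((hy (t + h)).sub (hy t)).const_smul h⁻¹) ?_
  have hclose : ∀ᶠ k in l, ‖(x₀ + ∫ u in (0 : ℝ)..t, W k u) - y t‖ + ε k < η / 2 := by
    have := ((hy t).sub_const (y t)).norm.add hε
    rw [sub_self, norm_zero, add_zero] at this
    exact this.eventually_lt_const (half_pos hη)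
  filter_upwards [hclose] with k hk
  refine slope_mem_closure_convexHull_nearbyValues
    (lipschitzWith_const_add_integral (hW_int k) (hW_le k) x₀ 0) hh (hW_int k _ _) ?_
    (fun s hs => hW k s ⟨ht.1.trans_lt hs.1, hs.2.trans hhT.le⟩) (by linarith)
  rw [add_sub_add_left_eq_sub, integral_interval_sub_left (hW_int k 0 _) (hW_int k 0 _)]

end viability

section upperSemicontinuous

variable {n : ℕ} {K : Set (Euc n)} {G : Euc n → Set (Euc n)}

lemma USCOn.exists_norm_le (husc : USCOn K G) {x₀ : Euc n} (hx₀ : x₀ ∈ K)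
    (hcpt : IsCompact (G x₀)) :
    ∃ r > 0, ∃ M : ℝ≥0, ∀ z ∈ K ∩ closedBall x₀ r, ∀ v ∈ G z, ‖v‖ ≤ M := by
  obtain ⟨R, hR⟩ := hcpt.isBounded.subset_ball 0
  obtain ⟨U, hU, hUG⟩ := husc x₀ hx₀ (ball 0 R) isOpen_ball hR
  obtain ⟨r, hr, hrU⟩ := nhds_basis_closedBall.mem_iff.1 hU
  refine ⟨r, hr, R.toNNReal, fun z hz v hv => ?_⟩
  have := hUG z ⟨hrU hz.2, hz.1⟩ hv
  rw [mem_ball_zero_iff] at this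
  exact this.le.trans (Real.le_coe_toNNReal R)

lemma USCOn.mem_of_forall_mem_closure_convexHull (husc : USCOn K G) {x : Euc n} (hx : x ∈ K)
    (hcpt : IsCompact (G x)) (hconv : Convex ℝ (G x)) {u : Euc n}
    (hu : ∀ η > 0, u ∈ closure (convexHull ℝ (nearbyValues K G x η))) : u ∈ G x := by
  by_contra hux
  obtain ⟨f, c₁, c₂, hfG, hc, hfu⟩ := geometric_hahn_banach_compact_closed hconv hcpt
    (convex_singleton u) isClosed_singleton (disjoint_singleton_right.2 hux)
  obtain ⟨U, hU, hUG⟩ := husc x hx (f ⁻¹' Iio c₁) (isOpen_Iio.preimage f.continuous) hfG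
  obtain ⟨ρ, hρ, hρU⟩ := nhds_basis_closedBall.mem_iff.1 hU
  obtain ⟨η', hη', hfη'⟩ := exists_pos_mul_lt (sub_pos.2 hc) ‖f‖
  set η := min ρ η'
  have hfη : ‖f‖ * η < c₂ - c₁ :=
    (mul_le_mul_of_nonneg_left (min_le_right _ _) (norm_nonneg f)).trans_lt hfη'
  have hhalf : nearbyValues K G x η ⊆ {v | f v ≤ c₁ + ‖f‖ * η} := by
    rintro v ⟨z, hzK, hzx, v', hv'G, hv'v⟩
    have hz : z ∈ U := hρU <| by
      rw [mem_closedBall, dist_eq_norm]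
      exact hzx.trans (min_le_left _ _)
    have hfv' : f v' < c₁ := hUG z ⟨hz, hzK⟩ hv'G
    have : f v - f v' ≤ ‖f‖ * η := by
      rw [← map_sub]
      exact (le_abs_self _).trans ((f.le_opNorm _).trans (by rw [norm_sub_rev]; gcongr))
    show f v ≤ _
    linarith
  have : f u ≤ c₁ + ‖f‖ * η := closure_minimal
    (convexHull_min hhalf (convex_halfSpace_le f.isLinear _))
    (isClosed_le f.continuous continuous_const) (hu η (lt_min hρ hη'))
  linarith [hfu u rfl]

lemma exists_viable_of_approx (hK : IsClosed K) (husc : USCOn K G)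
    (hcpt : ∀ x ∈ K, IsCompact (G x)) (hconv : ∀ x ∈ K, Convex ℝ (G x)) {x₀ : Euc n}
    (hx₀ : x₀ ∈ K) {T : ℝ} {L : ℝ≥0} {ε : ℕ → ℝ} (hε : Tendsto ε atTop (𝓝 0))
    {W : ℕ → ℝ → Euc n} (hW_meas : ∀ k, StronglyMeasurable (W k)) (hW_le : ∀ k s, ‖W k s‖ ≤ L)
    (hW : ∀ k, ∀ s ∈ Ioc 0 T, W k s ∈ nearbyValues K G (x₀ + ∫ u in (0 : ℝ)..s, W k u) (ε k)) :
    ∃ y : ℝ → Euc n, y 0 = x₀ ∧ LipschitzWith L y ∧ (∀ t ∈ Ico 0 T, y t ∈ K) ∧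
      ∀ t ∈ Ioo 0 T, DifferentiableAt ℝ y t → deriv y t ∈ G (y t) := by
  have hW_int (k : ℕ) (a b : ℝ) : IntervalIntegrable (W k) volume a b :=
    intervalIntegrable_const.mono_fun' (hW_meas k).aestronglyMeasurable (ae_of_all _ (hW_le k))
  set 𝒰 := Ultrafilter.of (atTop : Filter ℕ)
  have hε𝒰 : Tendsto ε 𝒰 (𝓝 0) := hε.mono_left (Ultrafilter.of_le _)
  obtain ⟨y, hy_lip, hy0, hY⟩ := exists_tendsto_ultrafilter_of_lipschitzWith 𝒰
    (fun k => lipschitzWith_const_add_integral (hW_int k) (hW_le k) x₀ 0) (x₀ := x₀)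
    fun k => by simp
  have hy := tendsto_pi_nhds.1 hY
  have hyK : ∀ t ∈ Ioc 0 T, y t ∈ K := fun t ht => by
    rw [hK.mem_iff_infDist_zero ⟨x₀, hx₀⟩]
    exact le_antisymm (le_of_tendsto_of_tendsto' (((continuous_infDist_pt K).tendsto _).comp
      (hy t)) hε𝒰 fun k => infDist_le_of_mem_nearbyValues (hW k t ht)) infDist_nonneg
  refine ⟨y, hy0, hy_lip, fun t ht => ?_, fun t ht hd => ?_⟩
  · rcases ht.1.eq_or_lt with rfl | ht0
    · rwa [hy0]
    · exact hyK t ⟨ht0, ht.2.le⟩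
  have hytK := hyK t (Ioo_subset_Ioc_self ht)
  exact husc.mem_of_forall_mem_closure_convexHull hytK (hcpt _ hytK) (hconv _ hytK)
    fun η hη => deriv_mem_closure_convexHull_of_tendsto hε𝒰 hW_int hW_le hW hy
      (Ioo_subset_Ico_self ht) hd hη

end upperSemicontinuous

theorem stmt6 {n : ℕ} (K : Set (Euc n)) (hK : IsClosed K) (G : Euc n → Set (Euc n))
    (husc : USCOn K G)
    (hcpt : ∀ x ∈ K, IsCompact (G x))
    (hconv : ∀ x ∈ K, Convex ℝ (G x))
    (hviab : ∀ x ∈ K, (G x ∩ contCone K x).Nonempty) :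
    ∀ x₀ ∈ K, ∃ ε : ℝ, 0 < ε ∧ ∃ y y' : ℝ → Euc n,
      y 0 = x₀ ∧
      (∀ t ∈ Set.Ico (0:ℝ) ε, y t ∈ K) ∧
      (∀ t ∈ Set.Ico (0:ℝ) ε, IntervalIntegrable y' MeasureTheory.volume 0 t ∧
        y t = x₀ + ∫ s in (0:ℝ)..t, y' s) ∧
      (∀ᵐ t ∂(MeasureTheory.volume.restrict (Set.Ioo (0:ℝ) ε)), y' t ∈ G (y t)) := by
  intro x₀ hx₀
  obtain ⟨r, hr, M, hM⟩ := husc.exists_norm_le hx₀ (hcpt x₀ hx₀)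
  choose W hW_meas hW_le hW using fun k : ℕ =>
    exists_approx_velocity hK hviab hx₀ hr hM (Nat.one_div_pos_of_nat (n := k))
  obtain ⟨y, hy0, hy_lip, hyK, hyG⟩ := exists_viable_of_approx hK husc hcpt hconv hx₀
    tendsto_one_div_add_atTop_nhds_zero_nat hW_meas hW_le hW
  refine ⟨r / (2 * (M + 1)), by positivity, y, deriv y, hy0, hyK,
    fun t _ => ⟨hy_lip.intervalIntegrable_deriv 0 t, ?_⟩, ?_⟩
  · rw [hy_lip.integral_deriv_eq_sub, hy0, add_sub_cancel]
  · filter_upwards [ae_restrict_mem measurableSet_Ioo,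
      ae_restrict_of_ae hy_lip.ae_differentiableAt] with t ht hd
    exact hyG t ht hd
end
end

section
/- (Rockafellar-type lemma) Let W : ℝⁿ → ℝ ∪ {+∞} be lower semicontinuous, x ∈ dom(W), and let (p,0) ∈ [T_{Epi(W)}(x, W(x))]⁻ with p ≠ 0. Then there exist points x_ε → x (as ε → 0+) with W(x_ε) → W(x) and vectors (p_ε, q_ε) ∈ [T_{Epi(W)}(x_ε, W(x_ε))]⁻ converging to (p,0) such that q_ε < 0 for every ε > 0. -/
/-
Fix `ε > 0`. Since `(p, 0)` is polar to the contingent cone of the epigraph at `(x, a)`,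
`a = W x`, it is a Fréchet normal there: `⟪p, y - x⟫ ≤ (ε / 6) ‖(y, r) - (x, a)‖` on the
epigraph near `(x, a)`. For small `δ > 0` and `τ = δ / 12`, minimize over a compact piece of the
epigraph the penalty `ε √(‖y - x‖² + τ²) - ⟪p, y - x⟫ + (ε / 3) δ (exp ((r - a) / δ) - 1)`.
Lower semicontinuity of `W` and the Fréchet inequality keep the minimizer `(y, r)` in the interior
of the piece, so it is a local minimizer on the epigraph, it lies on the graph and it is close to
`(x, a)`. By Fermat's rule minus the gradient of the penalty, which is `ε`-close to `(p, 0)` and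
has negative last component, is polar to the contingent cone of the epigraph at `(y, W y)`.
-/

open Filter Topology Metric Set
open scoped RealInnerProductSpace

noncomputable section

def eepi {n : ℕ} (W : Euc n → EReal) : Set (Euc n × ℝ) :=
  {p | W p.1 ≤ (p.2 : EReal)}

def negPolarP {n : ℕ} (T : Set (Euc n × ℝ)) : Set (Euc n × ℝ) :=
  {v | ∀ w ∈ T, ⟪v.1, w.1⟫ + v.2 * w.2 ≤ (0:ℝ)}

section ContingentCone

variable {E : Type*} [NormedAddCommGroup E] [NormedSpace ℝ E] {K : Set E} {z : E}

theorem contCone_subset_posTangentConeAt (hK : K.Nonempty) :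
    contCone K z ⊆ posTangentConeAt K z := by
  intro v hv
  choose! h hh₀ hhε hdist using hv
  have hy : ∀ ε > 0, ∃ y ∈ K, ‖z + h ε • v - y‖ < ε * h ε := fun ε hε => by
    simpa [dist_eq_norm] using (Metric.infDist_lt_iff hK).1 (hdist ε hε)
  choose! y hyK hyclose using hy
  have hlim : Tendsto (fun ε => (h ε)⁻¹ • (y ε - z)) (𝓝[>] 0) (𝓝 v) := by
    rw [tendsto_iff_norm_sub_tendsto_zero]
    refine squeeze_zero' (Eventually.of_forall fun _ => norm_nonneg _) ?_
      (tendsto_nhdsWithin_of_tendsto_nhds tendsto_id)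
    filter_upwards [self_mem_nhdsWithin] with ε hε
    have hpos := hh₀ ε hε
    have hsplit : (h ε)⁻¹ • (y ε - z) - v = -((h ε)⁻¹ • (z + h ε • v - y ε)) := by
      rw [smul_sub, smul_sub, smul_add, inv_smul_smul₀ hpos.ne']; abel
    calc ‖(h ε)⁻¹ • (y ε - z) - v‖ = (h ε)⁻¹ * ‖z + h ε • v - y ε‖ := by
          rw [hsplit, norm_neg, norm_smul, Real.norm_of_nonneg (inv_nonneg.2 hpos.le)]
      _ ≤ ε := by rw [inv_mul_le_iff₀ hpos]; linarith [hyclose ε hε]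
  have hinv : Tendsto (fun ε => ‖(h ε)⁻¹‖) (𝓝[>] 0) atTop := by
    refine tendsto_atTop_mono' _ ?_ tendsto_inv_nhdsGT_zero
    filter_upwards [self_mem_nhdsWithin] with ε hε
    rw [norm_inv, Real.norm_of_nonneg (hh₀ ε hε).le]
    exact inv_anti₀ (hh₀ ε hε) (hhε ε hε).le
  refine mem_tangentConeAt_of_seq (𝓝[>] (0:ℝ)) (fun ε => (h ε)⁻¹.toNNReal) (fun ε => y ε - z)
    (tangentConeAt.lim_zero _ hinv hlim) ?_ ?_
  · filter_upwards [self_mem_nhdsWithin] with ε hε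
    simpa using hyK ε hε
  · refine hlim.congr' ?_
    filter_upwards [self_mem_nhdsWithin] with ε hε
    rw [NNReal.smul_def, Real.coe_toNNReal _ (inv_nonneg.2 (hh₀ ε hε).le)]

theorem IsLocalMinOn.nonneg_of_mem_contCone {f : E → ℝ} {f' : E →L[ℝ] ℝ}
    (h : IsLocalMinOn f K z) (hz : z ∈ K) (hf : HasFDerivAt f f' z) {w : E}
    (hw : w ∈ contCone K z) : 0 ≤ f' w :=
  h.hasFDerivWithinAt_nonneg hf.hasFDerivWithinAt (contCone_subset_posTangentConeAt ⟨z, hz⟩ hw)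

theorem mem_contCone_of_tendsto {y : ℕ → E} {w : E} (hyK : ∀ k, y k ∈ K) (hne : ∀ k, y k ≠ z)
    (hyz : Tendsto y atTop (𝓝 z))
    (hw : Tendsto (fun k => ‖y k - z‖⁻¹ • (y k - z)) atTop (𝓝 w)) :
    w ∈ contCone K z := by
  intro ε hε
  obtain ⟨k, hk_near, hk_dir⟩ :=
    ((tendsto_iff_norm_sub_tendsto_zero.1 hyz).eventually (gt_mem_nhds hε)).and
      ((tendsto_iff_norm_sub_tendsto_zero.1 hw).eventually (gt_mem_nhds hε)) |>.exists
  set h := ‖y k - z‖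
  have hpos : 0 < h := norm_pos_iff.2 (sub_ne_zero.2 (hne k))
  refine ⟨h, hpos, hk_near, ?_⟩
  calc infDist (z + h • w) K ≤ dist (z + h • w) (y k) := infDist_le_dist_of_mem (hyK k)
    _ = h * ‖h⁻¹ • (y k - z) - w‖ := by
        have hsplit : z + h • w - y k = -(h • (h⁻¹ • (y k - z) - w)) := by
          rw [smul_sub, smul_inv_smul₀ hpos.ne']; abel
        rw [dist_eq_norm, hsplit, norm_neg, norm_smul, Real.norm_of_nonneg hpos.le]
    _ < ε * h := by rw [mul_comm ε]; exact mul_lt_mul_of_pos_left hk_dir hpos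

theorem eventually_le_mul_norm_of_nonpos_on_contCone [ProperSpace E] {ℓ : E →L[ℝ] ℝ}
    (hℓ : ∀ w ∈ contCone K z, ℓ w ≤ 0) {s : ℝ} (hs : 0 < s) :
    ∀ᶠ y in 𝓝 z, y ∈ K → ℓ (y - z) ≤ s * ‖y - z‖ := by
  by_contra hcon
  obtain ⟨y, hyz, hy⟩ := frequently_iff_seq_forall.1 (not_eventually.1 hcon)
  simp only [Classical.not_imp, not_le] at hy
  have hne : ∀ k, y k ≠ z := fun k he => by simpa [he] using (hy k).2
  have hu : ∀ k, ‖y k - z‖⁻¹ • (y k - z) ∈ sphere (0 : E) 1 := fun k => by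
    rw [mem_sphere_zero_iff_norm, norm_smul, norm_inv, norm_norm,
      inv_mul_cancel₀ (norm_ne_zero_iff.2 (sub_ne_zero.2 (hne k)))]
  obtain ⟨w, -, φ, hφ, hlim⟩ := (isCompact_sphere (0 : E) 1).tendsto_subseq hu
  have hw := mem_contCone_of_tendsto (fun k => (hy (φ k)).1) (fun k => hne (φ k))
    (hyz.comp hφ.tendsto_atTop) hlim
  have hsw : s ≤ ℓ w := by
    refine ge_of_tendsto ((ℓ.continuous.tendsto w).comp hlim) (Eventually.of_forall fun k => ?_)
    have hpos : 0 < ‖y (φ k) - z‖ := norm_pos_iff.2 (sub_ne_zero.2 (hne (φ k)))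
    change s ≤ ℓ (‖y (φ k) - z‖⁻¹ • (y (φ k) - z))
    rw [map_smul, smul_eq_mul, le_inv_mul_iff₀ hpos, mul_comm]
    exact (hy (φ k)).2.le
  linarith [hℓ w hw]

end ContingentCone

section Penalties

variable {F : Type*} [NormedAddCommGroup F] {τ δ : ℝ}

def smoothNorm (τ : ℝ) (v : F) : ℝ := √(‖v‖ ^ 2 + τ ^ 2)

theorem norm_le_smoothNorm (τ : ℝ) (v : F) : ‖v‖ ≤ smoothNorm τ v :=
  Real.le_sqrt_of_sq_le (by nlinarith)

theorem le_smoothNorm (τ : ℝ) (v : F) : τ ≤ smoothNorm τ v :=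
  Real.le_sqrt_of_sq_le (by nlinarith [sq_nonneg ‖v‖])

theorem smoothNorm_zero (hτ : 0 ≤ τ) : smoothNorm τ (0 : F) = τ := by
  simp [smoothNorm, Real.sqrt_sq hτ]

theorem hasFDerivAt_smoothNorm [InnerProductSpace ℝ F] (hτ : τ ≠ 0) (v : F) :
    HasFDerivAt (smoothNorm τ) ((smoothNorm τ v)⁻¹ • innerSL ℝ v) v := by
  have hpos : 0 < ‖v‖ ^ 2 + τ ^ 2 := by positivity
  refine (((hasFDerivAt_id (𝕜 := ℝ) v).norm_sq.add_const (τ ^ 2)).sqrt hpos.ne').congr_fderiv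
    (ContinuousLinearMap.ext fun w => ?_)
  simp [smoothNorm]
  field_simp

def expPenalty (δ ρ : ℝ) : ℝ := δ * (Real.exp (ρ / δ) - 1)

theorem le_expPenalty (hδ : 0 < δ) (ρ : ℝ) : ρ ≤ expPenalty δ ρ := by
  have := Real.add_one_le_exp (ρ / δ)
  calc ρ = δ * (ρ / δ) := by field_simp
    _ ≤ expPenalty δ ρ := by unfold expPenalty; gcongr; linarith

theorem neg_le_expPenalty (hδ : 0 ≤ δ) (ρ : ℝ) : -δ ≤ expPenalty δ ρ := by
  unfold expPenalty; nlinarith [Real.exp_pos (ρ / δ)]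

@[simp]
theorem expPenalty_zero : expPenalty δ 0 = 0 := by simp [expPenalty]

theorem expPenalty_strictMono (hδ : 0 < δ) : StrictMono (expPenalty δ) := fun _ _ h => by
  unfold expPenalty; gcongr

theorem hasDerivAt_expPenalty (hδ : δ ≠ 0) (ρ : ℝ) :
    HasDerivAt (expPenalty δ) (Real.exp (ρ / δ)) ρ :=
  ((((hasDerivAt_id ρ).div_const δ).exp.sub_const 1).const_mul δ).congr_deriv
    (by simp; field_simp)

end Penalties

section Epigraph

variable {n : ℕ} {W : Euc n → EReal}

theorem isClosed_eepi (hW : LowerSemicontinuous W) : IsClosed (eepi W) :=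
  hW.isClosed_epigraph.preimage
    (continuous_fst.prodMk (continuous_coe_real_ereal.comp continuous_snd))

theorem mem_eepi_of_le {y : Euc n} {r s : ℝ} (h : (y, r) ∈ eepi W) (hrs : r ≤ s) :
    (y, s) ∈ eepi W :=
  le_trans (α := EReal) h (EReal.coe_le_coe_iff.2 hrs)

end Epigraph

section PenalizedProblem

variable {n : ℕ} (p x : Euc n) (a δ ε : ℝ)

/- The linear growth `ε` in `y` beats the slack `ε / 6` with which `p` is a Fréchet normal at
`(x, a)`, so minimizers stay close to `x`.  The term in `r` is strictly increasing, which forces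
minimizers onto the graph and makes the last component of the normal negative, and it is bounded
below by `-δ`, so that it cannot pull minimizers far below `a`. -/
def penalty (z : Euc n × ℝ) : ℝ :=
  ε * smoothNorm (δ / 12) (z.1 - x) - ⟪p, z.1 - x⟫ + ε / 3 * expPenalty δ (z.2 - a)

def penaltyNormal (z : Euc n × ℝ) : Euc n × ℝ :=
  (p - (ε / smoothNorm (δ / 12) (z.1 - x)) • (z.1 - x), -(ε / 3 * Real.exp ((z.2 - a) / δ)))

def penaltyBox : Set (Euc n × ℝ) :=
  closedBall x δ ×ˢ Icc (a - ε) (a + δ)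

variable {δ}

theorem hasFDerivAt_penalty (hδ : δ ≠ 0) (z : Euc n × ℝ) :
    ∃ ℓ : Euc n × ℝ →L[ℝ] ℝ, HasFDerivAt (penalty p x a δ ε) ℓ z ∧
      ∀ w, ℓ w =
        -(⟪(penaltyNormal p x a δ ε z).1, w.1⟫ + (penaltyNormal p x a δ ε z).2 * w.2) := by
  have hfst : HasFDerivAt (fun z : Euc n × ℝ => z.1 - x) (ContinuousLinearMap.fst ℝ _ _) z :=
    hasFDerivAt_fst.sub_const x
  have hsnd : HasFDerivAt (fun z : Euc n × ℝ => z.2 - a) (ContinuousLinearMap.snd ℝ _ _) z :=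
    hasFDerivAt_snd.sub_const a
  have hN :=
    ((hasFDerivAt_smoothNorm (by positivity : δ / 12 ≠ 0) (z.1 - x)).comp z hfst).const_mul ε
  have hI := ((innerSL ℝ p).hasFDerivAt (x := z.1 - x)).comp z hfst
  have hE := ((hasDerivAt_expPenalty hδ (z.2 - a)).comp_hasFDerivAt z hsnd).const_mul (ε / 3)
  refine ⟨_, (hN.sub hI).add hE, fun w => ?_⟩
  simp [penaltyNormal, inner_sub_left, real_inner_smul_left]
  ring

variable {W : Euc n → EReal} {p x a ε}

theorem penaltyNormal_mem_negPolarP (hδ : δ ≠ 0) {z : Euc n × ℝ} (hz : z ∈ eepi W)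
    (hmin : IsLocalMinOn (penalty p x a δ ε) (eepi W) z) :
    penaltyNormal p x a δ ε z ∈ negPolarP (contCone (eepi W) z) := by
  obtain ⟨ℓ, hℓ, hℓw⟩ := hasFDerivAt_penalty p x a ε hδ z
  intro w hw
  linarith [hℓw w ▸ hmin.nonneg_of_mem_contCone hz hℓ hw]

theorem penaltyNormal_snd_neg (hε : 0 < ε) (z : Euc n × ℝ) :
    (penaltyNormal p x a δ ε z).2 < 0 := by
  have := Real.exp_pos ((z.2 - a) / δ)
  simp only [penaltyNormal, Left.neg_neg_iff]
  positivity

theorem dist_penaltyNormal_le (hε : 0 ≤ ε) (hδ : 0 < δ) {z : Euc n × ℝ} (hz : z.2 - a ≤ δ) :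
    dist (penaltyNormal p x a δ ε z) (p, 0) ≤ ε := by
  have hS : 0 < smoothNorm (δ / 12) (z.1 - x) :=
    (by positivity : 0 < δ / 12).trans_le (le_smoothNorm _ _)
  have hexp : Real.exp ((z.2 - a) / δ) ≤ 3 :=
    calc Real.exp ((z.2 - a) / δ) ≤ Real.exp 1 := Real.exp_le_exp.2 ((div_le_one hδ).2 hz)
      _ ≤ 3 := Real.exp_one_lt_d9.le.trans (by norm_num)
  rw [Prod.dist_eq, max_le_iff, dist_eq_norm, Real.dist_eq]
  constructor
  · rw [penaltyNormal, sub_sub_cancel_left, norm_neg, norm_smul,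
      Real.norm_of_nonneg (by positivity), div_mul_eq_mul_div, div_le_iff₀ hS]
    exact mul_le_mul_of_nonneg_left (norm_le_smoothNorm _ _) hε
  · rw [penaltyNormal, sub_zero, abs_neg, abs_of_nonneg (by positivity)]
    nlinarith

theorem mem_eepi_inter_penaltyBox (hxa : W x = a) (hδ : 0 ≤ δ) (hε : 0 ≤ ε) :
    (x, a) ∈ eepi W ∩ penaltyBox x a δ ε :=
  ⟨hxa.le, mem_closedBall_self hδ, by linarith, by linarith⟩

theorem penalty_self (hδ : 0 ≤ δ) : penalty p x a δ ε (x, a) = ε * (δ / 12) := by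
  simp [penalty, smoothNorm_zero (by positivity : 0 ≤ δ / 12)]

theorem penalty_minimizer_bounds (hε : 0 < ε) (hδ : 0 < δ) (hxa : W x = a)
    (hfrechet : ∀ z ∈ eepi W, dist z (x, a) ≤ δ → ⟪p, z.1 - x⟫ ≤ ε / 6 * dist z (x, a))
    {z : Euc n × ℝ} (hz : z ∈ eepi W ∩ penaltyBox x a δ ε)
    (hmin : IsMinOn (penalty p x a δ ε) (eepi W ∩ penaltyBox x a δ ε) z) :
    ‖z.1 - x‖ ≤ δ / 2 ∧ z.2 - a ≤ δ / 2 := by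
  obtain ⟨hzW, hzx, -, hza⟩ := hz
  rw [mem_closedBall, dist_eq_norm] at hzx
  have hval : penalty p x a δ ε z ≤ ε * (δ / 12) :=
    penalty_self (p := p) hδ.le ▸ hmin (mem_eepi_inter_penaltyBox hxa hδ.le hε.le)
  -- Test the Fréchet inequality at the point above `z` at height `a`, which lies in the epigraph.
  have hd : dist (z.1, max z.2 a) (x, a) = max ‖z.1 - x‖ (max (z.2 - a) 0) := by
    rw [Prod.dist_eq, dist_eq_norm, Real.dist_eq, ← max_sub_sub_right, sub_self,
      abs_of_nonneg (le_max_right _ _)]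
  have hP : ⟪p, z.1 - x⟫ ≤ ε / 6 * (‖z.1 - x‖ + max (z.2 - a) 0) := by
    refine (hfrechet (z.1, max z.2 a) (mem_eepi_of_le hzW (le_max_left _ _)) ?_).trans ?_
    · rw [hd]; exact max_le hzx (max_le (by linarith) hδ.le)
    · rw [hd]; exact mul_le_mul_of_nonneg_left
        (max_le_add_of_nonneg (norm_nonneg _) (le_max_right _ _)) (by positivity)
  have hN := mul_le_mul_of_nonneg_left (norm_le_smoothNorm (δ / 12) (z.1 - x)) hε.le
  have hG₁ := mul_le_mul_of_nonneg_left (le_expPenalty hδ (z.2 - a)) hε.le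
  have hG₂ := mul_le_mul_of_nonneg_left (neg_le_expPenalty hδ.le (z.2 - a)) hε.le
  unfold penalty at hval
  rcases le_total (z.2 - a) 0 with hρ | hρ
  · rw [max_eq_right hρ] at hP
    exact ⟨le_of_mul_le_mul_left (by linarith) hε, by linarith⟩
  · rw [max_eq_left hρ] at hP
    have := mul_nonneg hε.le (norm_nonneg (z.1 - x))
    have := mul_nonneg hε.le hρ
    exact ⟨le_of_mul_le_mul_left (by linarith) hε, le_of_mul_le_mul_left (by linarith) hε⟩

theorem penalty_minimizer_on_graph (hε : 0 < ε) (hδ : 0 < δ)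
    (hlsc : ∀ y, dist y x ≤ δ → ((a - ε : ℝ) : EReal) < W y)
    {z : Euc n × ℝ} (hz : z ∈ eepi W ∩ penaltyBox x a δ ε)
    (hmin : IsMinOn (penalty p x a δ ε) (eepi W ∩ penaltyBox x a δ ε) z) :
    W z.1 = z.2 := by
  obtain ⟨hzW, hzx, -, hza⟩ := hz
  change W z.1 ≤ z.2 at hzW
  have hlow := hlsc z.1 hzx
  obtain ⟨t, ht⟩ : ∃ t : ℝ, W z.1 = t :=
    ⟨_, (EReal.coe_toReal (ne_top_of_le_ne_top (EReal.coe_ne_top _) hzW) hlow.ne_bot).symm⟩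
  rw [ht] at hzW hlow ⊢
  have htz : t ≤ z.2 := EReal.coe_le_coe_iff.1 hzW
  have hta : a - ε < t := EReal.coe_lt_coe_iff.1 hlow
  -- Lowering `z` onto the graph strictly decreases the penalty unless `z` is already there.
  refine congrArg _ (le_antisymm htz (not_lt.1 fun hlt => ?_))
  have hle : penalty p x a δ ε z ≤ penalty p x a δ ε (z.1, t) :=
    hmin ⟨ht.le, hzx, hta.le, htz.trans hza⟩
  have hstrict := expPenalty_strictMono hδ (show t - a < z.2 - a by linarith)
  unfold penalty at hle
  nlinarith

theorem exists_isLocalMinOn_penalty (hW : LowerSemicontinuous W) (hxa : W x = a)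
    (hε : 0 < ε) (hδ : 0 < δ)
    (hfrechet : ∀ z ∈ eepi W, dist z (x, a) ≤ δ → ⟪p, z.1 - x⟫ ≤ ε / 6 * dist z (x, a))
    (hlsc : ∀ y, dist y x ≤ δ → ((a - ε : ℝ) : EReal) < W y) :
    ∃ z : Euc n × ℝ, W z.1 = z.2 ∧ ‖z.1 - x‖ ≤ δ / 2 ∧ a - ε < z.2 ∧ z.2 - a ≤ δ / 2 ∧
      IsLocalMinOn (penalty p x a δ ε) (eepi W) z := by
  have hK : IsCompact (eepi W ∩ penaltyBox x a δ ε) :=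
    ((isCompact_closedBall x δ).prod isCompact_Icc).inter_left (isClosed_eepi hW)
  have hcont : Continuous (penalty p x a δ ε) := continuous_iff_continuousAt.2 fun z =>
    (hasFDerivAt_penalty p x a ε hδ.ne' z).choose_spec.1.continuousAt
  obtain ⟨z, hz, hmin⟩ :=
    hK.exists_isMinOn ⟨_, mem_eepi_inter_penaltyBox hxa hδ.le hε.le⟩ hcont.continuousOn
  have hgraph := penalty_minimizer_on_graph hε hδ hlsc hz hmin
  obtain ⟨hzx, hza⟩ := penalty_minimizer_bounds hε hδ hxa hfrechet hz hmin
  have hlow : a - ε < z.2 := EReal.coe_lt_coe_iff.1 (hgraph ▸ hlsc z.1 hz.2.1)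
  have hbox : penaltyBox x a δ ε ∈ 𝓝 z :=
    prod_mem_nhds (closedBall_mem_nhds_of_mem (mem_ball_iff_norm.2 (by linarith)))
      (Icc_mem_nhds hlow (by linarith))
  refine ⟨z, hgraph, hzx, hlow, hza, ?_⟩
  rw [IsLocalMinOn, nhdsWithin_restrict' _ hbox]
  exact hmin.localize

end PenalizedProblem

theorem tendsto_nhdsGT_zero_of_dist_le {α : Type*} [PseudoMetricSpace α] {f : ℝ → α} {c : α}
    (h : ∀ ε > 0, dist (f ε) c ≤ ε) : Tendsto f (𝓝[>] 0) (𝓝 c) :=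
  tendsto_iff_dist_tendsto_zero.2 <| squeeze_zero' (Eventually.of_forall fun _ => dist_nonneg)
    (eventually_nhdsWithin_of_forall h) (tendsto_nhdsWithin_of_tendsto_nhds tendsto_id)

theorem exists_normal_near_of_horizontal_normal {n : ℕ} {W : Euc n → EReal} {x p : Euc n}
    {a : ℝ} (hW : LowerSemicontinuous W) (hxa : W x = a)
    (hpol : (p, (0 : ℝ)) ∈ negPolarP (contCone (eepi W) (x, a))) {ε : ℝ} (hε : 0 < ε) :
    ∃ y : Euc n, ∃ b : ℝ, ∃ v : Euc n × ℝ, W y = b ∧ dist y x ≤ ε ∧ dist b a ≤ ε ∧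
      dist v (p, 0) ≤ ε ∧ v.2 < 0 ∧ v ∈ negPolarP (contCone (eepi W) (y, b)) := by
  have hℓ : ∀ w ∈ contCone (eepi W) (x, a),
      (innerSL ℝ p ∘L ContinuousLinearMap.fst ℝ (Euc n) ℝ) w ≤ 0 := fun w hw => by
    simpa using hpol w hw
  obtain ⟨δF, hδF, hfrechet⟩ := Metric.eventually_nhds_iff.1
    (eventually_le_mul_norm_of_nonpos_on_contCone hℓ (by positivity : 0 < ε / 6))
  obtain ⟨δm, hδm, hlsc⟩ := Metric.eventually_nhds_iff.1
    (hW x _ (hxa ▸ EReal.coe_lt_coe_iff.2 (by linarith : a - ε < a)))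
  set δ := min (min δF δm) ε / 2 with hδdef
  have hδ : 0 < δ := by positivity
  have hδF' : δ < δF := by linarith [min_le_left (min δF δm) ε, min_le_left δF δm, hδdef]
  have hδm' : δ < δm := by linarith [min_le_left (min δF δm) ε, min_le_right δF δm, hδdef]
  have hδε : δ ≤ ε := by linarith [min_le_right (min δF δm) ε, hδdef]
  obtain ⟨z, hgraph, hzx, hlow, hza, hmin⟩ := exists_isLocalMinOn_penalty (p := p) hW hxa hε hδ
    (fun z hz hd => by simpa [dist_eq_norm] using hfrechet (hd.trans_lt hδF') hz)
    (fun y hy => hlsc (hy.trans_lt hδm'))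
  refine ⟨z.1, z.2, penaltyNormal p x a δ ε z, hgraph, ?_, ?_, dist_penaltyNormal_le hε.le hδ
    (by linarith), penaltyNormal_snd_neg hε z,
    penaltyNormal_mem_negPolarP hδ.ne' (show W z.1 ≤ z.2 from hgraph.le) hmin⟩
  · rw [dist_eq_norm]; linarith
  · rw [Real.dist_eq, abs_le]; constructor <;> linarith

theorem stmt9_general {n : ℕ} (W : Euc n → EReal)
    (hWbot : ∀ y, W y ≠ ⊥)
    (hWlsc : LowerSemicontinuous W)
    (x : Euc n) (hx : W x ≠ ⊤)
    (p : Euc n)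
    (hpol : (p, (0:ℝ)) ∈ negPolarP (contCone (eepi W) (x, (W x).toReal))) :
    ∃ xe : ℝ → Euc n, ∃ pe : ℝ → Euc n, ∃ qe : ℝ → ℝ,
      Filter.Tendsto xe (𝓝[>] (0:ℝ)) (𝓝 x) ∧
      Filter.Tendsto (fun ε => W (xe ε)) (𝓝[>] (0:ℝ)) (𝓝 (W x)) ∧
      Filter.Tendsto (fun ε => (pe ε, qe ε)) (𝓝[>] (0:ℝ)) (𝓝 (p, (0:ℝ))) ∧
      ∀ ε : ℝ, 0 < ε → qe ε < 0 ∧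
        (pe ε, qe ε) ∈ negPolarP (contCone (eepi W) (xe ε, (W (xe ε)).toReal)) := by
  have hxa : W x = ((W x).toReal : EReal) := (EReal.coe_toReal hx (hWbot x)).symm
  choose! y b v hyb hy hb hv hneg hmem using fun ε (hε : 0 < ε) =>
    exists_normal_near_of_horizontal_normal hWlsc hxa hpol hε
  refine ⟨y, fun ε => (v ε).1, fun ε => (v ε).2, tendsto_nhdsGT_zero_of_dist_le hy, ?_,
    tendsto_nhdsGT_zero_of_dist_le hv, fun ε hε => ⟨hneg ε hε, ?_⟩⟩
  · rw [hxa]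
    exact ((continuous_coe_real_ereal.tendsto _).comp
      (tendsto_nhdsGT_zero_of_dist_le hb)).congr'
      (eventually_nhdsWithin_of_forall fun ε hε => (hyb ε hε).symm)
  · rw [hyb ε hε, EReal.toReal_coe]
    exact hmem ε hε

theorem stmt9 {n : ℕ} (W : Euc n → EReal)
    (hWbot : ∀ y, W y ≠ ⊥)
    (hWlsc : LowerSemicontinuous W)
    (x : Euc n) (hx : W x ≠ ⊤)
    (p : Euc n) (hp : p ≠ 0)
    (hpol : (p, (0:ℝ)) ∈ negPolarP (contCone (eepi W) (x, (W x).toReal))) :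
    ∃ xe : ℝ → Euc n, ∃ pe : ℝ → Euc n, ∃ qe : ℝ → ℝ,
      Filter.Tendsto xe (𝓝[>] (0:ℝ)) (𝓝 x) ∧
      Filter.Tendsto (fun ε => W (xe ε)) (𝓝[>] (0:ℝ)) (𝓝 (W x)) ∧
      Filter.Tendsto (fun ε => (pe ε, qe ε)) (𝓝[>] (0:ℝ)) (𝓝 (p, (0:ℝ))) ∧
      ∀ ε : ℝ, 0 < ε → qe ε < 0 ∧
        (pe ε, qe ε) ∈ negPolarP (contCone (eepi W) (xe ε, (W (xe ε)).toReal)) :=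
  stmt9_general W hWbot hWlsc x hx p hpol
end
end
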